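/- arXiv:2411.04450 — 9 statements merged into one kernel-verified Lean document; each statement's English description precedes it below -/
import Mathlib

section
/- Let ρ be a probability measure on ℝ × (ℝ × ℝ) with first marginal ρ.fst and disintegration kernel K = ρ.condKernel. Then for all y1, y0 ∈ ℝ: ∫ max(F1(y1 | y') + F0(y0 | y') − 1, 0) dρ.fst(y') ≤ ρ{(y', (a, b)) : a ≤ y1 and b ≤ y0} ≤ ∫ min(F1(y1 | y'), F0(y0 | y')) dρ.fst(y'). That is, the unconditional joint CDF of the last two coordinates lies between the ρ.fst-expectations of the conditional Fréchet–Hoeffding lower and upper bounds. -/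
open MeasureTheory ProbabilityTheory
open scoped ENNReal

lemma frechet_pointwise {α : Type*} [MeasurableSpace α] (μ : Measure α) [IsProbabilityMeasure μ]
    {A C : Set α} (hA : MeasurableSet A) (hC : MeasurableSet C) :
    max ((μ A).toReal + (μ C).toReal - 1) 0 ≤ (μ (A ∩ C)).toReal ∧
      (μ (A ∩ C)).toReal ≤ min (μ A).toReal (μ C).toReal := by
  have hfin : ∀ s : Set α, μ s ≠ ⊤ := fun s => measure_ne_top μ s
  constructor
  · refine max_le ?_ ENNReal.toReal_nonneg
    have h := measure_union_add_inter (μ := μ) A hC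
    have h' : (μ (A ∪ C)).toReal + (μ (A ∩ C)).toReal = (μ A).toReal + (μ C).toReal := by
      rw [← ENNReal.toReal_add (hfin _) (hfin _), ← ENNReal.toReal_add (hfin _) (hfin _), h]
    have hle : (μ (A ∪ C)).toReal ≤ 1 := by
      rw [← ENNReal.toReal_one]
      exact ENNReal.toReal_mono ENNReal.one_ne_top prob_le_one
    linarith
  · exact le_min (ENNReal.toReal_mono (hfin _) (measure_mono Set.inter_subset_left))
      (ENNReal.toReal_mono (hfin _) (measure_mono Set.inter_subset_right))

/-- **Integrated Fréchet–Hoeffding bounds on the joint distribution** (Theorem 1 of the paper).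
For a probability measure `ρ` on `ℝ × (ℝ × ℝ)` with first marginal `ρ.fst` and disintegration
kernel `K = ρ.condKernel`, the unconditional joint CDF of the last two coordinates lies between
the `ρ.fst`-expectations of the conditional Fréchet–Hoeffding lower and upper bounds. -/
theorem integrated_frechet_hoeffding_bounds
    (ρ : Measure (ℝ × ℝ × ℝ)) [IsProbabilityMeasure ρ] (y1 y0 : ℝ) :
    (∫ y', max ((ρ.condKernel y' {p : ℝ × ℝ | p.1 ≤ y1}).toReal
          + (ρ.condKernel y' {p : ℝ × ℝ | p.2 ≤ y0}).toReal - 1) 0 ∂ρ.fst)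
        ≤ (ρ {q : ℝ × ℝ × ℝ | q.2.1 ≤ y1 ∧ q.2.2 ≤ y0}).toReal
    ∧ (ρ {q : ℝ × ℝ × ℝ | q.2.1 ≤ y1 ∧ q.2.2 ≤ y0}).toReal
        ≤ ∫ y', min ((ρ.condKernel y' {p : ℝ × ℝ | p.1 ≤ y1}).toReal)
                    ((ρ.condKernel y' {p : ℝ × ℝ | p.2 ≤ y0}).toReal) ∂ρ.fst := by
  set K := ρ.condKernel with hK
  set A : Set (ℝ × ℝ) := {p : ℝ × ℝ | p.1 ≤ y1} with hAdef
  set C : Set (ℝ × ℝ) := {p : ℝ × ℝ | p.2 ≤ y0} with hCdef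
  have hA : MeasurableSet A := measurable_fst measurableSet_Iic
  have hC : MeasurableSet C := measurable_snd measurableSet_Iic
  have hs : MeasurableSet {q : ℝ × ℝ × ℝ | q.2.1 ≤ y1 ∧ q.2.2 ≤ y0} := by
    have : {q : ℝ × ℝ × ℝ | q.2.1 ≤ y1 ∧ q.2.2 ≤ y0}
        = ((fun q : ℝ × ℝ × ℝ => q.2.1) ⁻¹' Set.Iic y1)
          ∩ ((fun q : ℝ × ℝ × ℝ => q.2.2) ⁻¹' Set.Iic y0) := rfl
    rw [this]
    exact ((measurable_fst.comp measurable_snd) measurableSet_Iic).inter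
      ((measurable_snd.comp measurable_snd) measurableSet_Iic)
  -- express the measure as a lintegral
  have hmeas : ρ {q : ℝ × ℝ × ℝ | q.2.1 ≤ y1 ∧ q.2.2 ≤ y0}
      = ∫⁻ y', K y' (A ∩ C) ∂ρ.fst := by
    rw [← MeasureTheory.Measure.lintegral_condKernel_mem (ρ := ρ) hs]
    rfl
  -- toReal
  have hKmeasAC : Measurable fun y' => K y' (A ∩ C) := Kernel.measurable_coe K (hA.inter hC)
  have hKmeasA : Measurable fun y' => K y' A := Kernel.measurable_coe K hA
  have hKmeasC : Measurable fun y' => K y' C := Kernel.measurable_coe K hC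
  have htop : ∀ᵐ y' ∂ρ.fst, K y' (A ∩ C) < ⊤ :=
    Filter.Eventually.of_forall fun y' => measure_lt_top _ _
  have hto : (ρ {q : ℝ × ℝ × ℝ | q.2.1 ≤ y1 ∧ q.2.2 ≤ y0}).toReal
      = ∫ y', (K y' (A ∩ C)).toReal ∂ρ.fst := by
    rw [hmeas, ← integral_toReal hKmeasAC.aemeasurable htop]
  -- integrability facts
  have hint : ∀ {f : ℝ → ℝ≥0∞}, Measurable f → (∀ y', f y' ≤ 1) →
      Integrable (fun y' => (f y').toReal) ρ.fst := by
    intro f hf hb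
    refine Integrable.mono' (integrable_const 1) hf.ennreal_toReal.aestronglyMeasurable ?_
    refine Filter.Eventually.of_forall fun y' => ?_
    rw [Real.norm_eq_abs, abs_of_nonneg ENNReal.toReal_nonneg]
    calc (f y').toReal ≤ (1 : ℝ≥0∞).toReal :=
          ENNReal.toReal_mono ENNReal.one_ne_top (hb y')
      _ = 1 := ENNReal.toReal_one
  have hb : ∀ (s : Set (ℝ × ℝ)) y', K y' s ≤ 1 := fun s y' => prob_le_one
  have hiAC := hint hKmeasAC (hb _)
  have hiA := hint hKmeasA (hb _)
  have hiC := hint hKmeasC (hb _)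
  constructor
  · rw [hto]
    refine integral_mono ?_ hiAC fun y' =>
      (frechet_pointwise (K y') hA hC).1
    exact ((hiA.add hiC).sub (integrable_const 1)).sup (integrable_const 0)
  · rw [hto]
    exact integral_mono hiAC (hiA.inf hiC) fun y' => (frechet_pointwise (K y') hA hC).2
end

section
/- Let Y1 and Y0 be real-valued random variables on a probability space (Ω, P), with CDFs F_{Y1} and F_{Y0}. Then for every δ ∈ ℝ and every y ∈ ℝ, F_{Y1}(y) − F_{Y0}(y − δ) ≤ P(Y1 − Y0 ≤ δ); consequently sup_{y ∈ ℝ} max(F_{Y1}(y) − F_{Y0}(y − δ), 0) ≤ P(Y1 − Y0 ≤ δ). -/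
open MeasureTheory ProbabilityTheory

/-- **Lower Williamson–Downs (Makarov) bound** on the distribution of the treatment effect
`Y1 - Y0` (lower-bound half of Lemma 3 of the paper). -/
theorem williamson_downs_lower_bound
    {Ω : Type*} [MeasurableSpace Ω] (P : Measure Ω) [IsProbabilityMeasure P]
    (Y1 Y0 : Ω → ℝ) (hY1 : Measurable Y1) (hY0 : Measurable Y0) (δ : ℝ) :
    (∀ y : ℝ,
      (P {ω | Y1 ω ≤ y}).toReal - (P {ω | Y0 ω ≤ y - δ}).toReal
        ≤ (P {ω | Y1 ω - Y0 ω ≤ δ}).toReal)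
    ∧ (⨆ y : ℝ, max ((P {ω | Y1 ω ≤ y}).toReal - (P {ω | Y0 ω ≤ y - δ}).toReal) 0)
        ≤ (P {ω | Y1 ω - Y0 ω ≤ δ}).toReal := by
  have key : ∀ y : ℝ,
      (P {ω | Y1 ω ≤ y}).toReal - (P {ω | Y0 ω ≤ y - δ}).toReal
        ≤ (P {ω | Y1 ω - Y0 ω ≤ δ}).toReal := by
    intro y
    have hsub : {ω | Y1 ω ≤ y} ⊆ {ω | Y1 ω - Y0 ω ≤ δ} ∪ {ω | Y0 ω ≤ y - δ} := by
      intro ω hω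
      by_cases h : Y0 ω ≤ y - δ
      · exact Or.inr h
      · exact Or.inl (by push_neg at h; simp only [Set.mem_setOf_eq] at hω ⊢; linarith)
    have h1 : P {ω | Y1 ω ≤ y} ≤ P {ω | Y1 ω - Y0 ω ≤ δ} + P {ω | Y0 ω ≤ y - δ} :=
      le_trans (measure_mono hsub) (measure_union_le _ _)
    have hf1 : P {ω | Y1 ω ≤ y} ≠ ⊤ := measure_ne_top _ _
    have hf2 : P {ω | Y0 ω ≤ y - δ} ≠ ⊤ := measure_ne_top _ _
    have hf3 : P {ω | Y1 ω - Y0 ω ≤ δ} ≠ ⊤ := measure_ne_top _ _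
    have := ENNReal.toReal_mono (by finiteness) h1
    rw [ENNReal.toReal_add hf3 hf2] at this
    linarith
  refine ⟨key, ciSup_le fun y => ?_⟩
  exact max_le (key y) ENNReal.toReal_nonneg
end

section
/- Let Y1 and Y0 be real-valued random variables on a probability space (Ω, P), with CDFs F_{Y1} and F_{Y0}, and suppose F_{Y0} is continuous. Then for every δ ∈ ℝ and every y ∈ ℝ, P(Y1 − Y0 ≤ δ) ≤ 1 + F_{Y1}(y) − F_{Y0}(y − δ); consequently P(Y1 − Y0 ≤ δ) ≤ 1 + inf_{y ∈ ℝ} min(F_{Y1}(y) − F_{Y0}(y − δ), 0). -/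
open MeasureTheory ProbabilityTheory

/-- **Upper Williamson–Downs (Makarov) bound** on the distribution of the treatment effect
`Y1 - Y0` (upper-bound half of Lemma 3 of the paper), under continuity of the CDF of the
untreated outcome `Y0`. -/
theorem williamson_downs_upper_bound
    {Ω : Type*} [MeasurableSpace Ω] (P : Measure Ω) [IsProbabilityMeasure P]
    (Y1 Y0 : Ω → ℝ) (hY1 : Measurable Y1) (hY0 : Measurable Y0)
    (hcont : Continuous fun x : ℝ => (P {ω | Y0 ω ≤ x}).toReal) (δ : ℝ) :
    (∀ y : ℝ,
      (P {ω | Y1 ω - Y0 ω ≤ δ}).toReal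
        ≤ 1 + (P {ω | Y1 ω ≤ y}).toReal - (P {ω | Y0 ω ≤ y - δ}).toReal)
    ∧ (P {ω | Y1 ω - Y0 ω ≤ δ}).toReal
        ≤ 1 + ⨅ y : ℝ, min ((P {ω | Y1 ω ≤ y}).toReal - (P {ω | Y0 ω ≤ y - δ}).toReal) 0 := by
  have key : ∀ y : ℝ, (P {ω | Y1 ω - Y0 ω ≤ δ}).toReal
      ≤ 1 + (P {ω | Y1 ω ≤ y}).toReal - (P {ω | Y0 ω ≤ y - δ}).toReal := by
    intro y
    set A := {ω | Y1 ω - Y0 ω ≤ δ} with hA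
    set B := {ω | Y1 ω ≤ y} with hB
    set C := {ω | Y0 ω ≤ y - δ} with hCdef
    have hC : MeasurableSet C := hY0 measurableSet_Iic
    have hsub : A ⊆ B ∪ Cᶜ := by
      intro ω hω
      by_cases h : Y1 ω ≤ y
      · exact Or.inl h
      · right
        simp only [hA, hCdef, Set.mem_setOf_eq, Set.mem_compl_iff, not_le] at *
        linarith
    have h1 : P A ≤ P B + P Cᶜ := (measure_mono hsub).trans (measure_union_le _ _)
    have hcompl : (P Cᶜ).toReal = 1 - (P C).toReal := by
      rw [measure_compl hC (measure_ne_top P C),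
        ENNReal.toReal_sub_of_le (measure_mono (Set.subset_univ C)) (measure_ne_top P _)]
      simp
    have h2 : (P A).toReal ≤ (P B).toReal + (P Cᶜ).toReal := by
      rw [← ENNReal.toReal_add (measure_ne_top P _) (measure_ne_top P _)]
      exact ENNReal.toReal_mono (ENNReal.add_ne_top.mpr
        ⟨measure_ne_top P _, measure_ne_top P _⟩) h1
    linarith
  refine ⟨key, ?_⟩
  have hle1 : (P {ω | Y1 ω - Y0 ω ≤ δ}).toReal ≤ 1 := by
    have := prob_le_one (μ := P) (s := {ω | Y1 ω - Y0 ω ≤ δ})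
    exact ENNReal.toReal_le_of_le_ofReal zero_le_one (by simpa using this)
  have hinf : (P {ω | Y1 ω - Y0 ω ≤ δ}).toReal - 1
      ≤ ⨅ y : ℝ, min ((P {ω | Y1 ω ≤ y}).toReal - (P {ω | Y0 ω ≤ y - δ}).toReal) 0 :=
    le_ciInf fun y => le_min (by linarith [key y]) (by linarith)
  linarith
end

section
/- Let ρ be a probability measure on ℝ × (ℝ × ℝ) with first marginal ρ.fst and disintegration kernel K = ρ.condKernel, and suppose that for ρ.fst-almost every y' the conditional CDF y0 ↦ F0(y0 | y') is continuous. Then for every δ ∈ ℝ: ∫ sup_{y ∈ ℝ} max(F1(y | y') − F0(y − δ | y'), 0) dρ.fst(y') ≤ ρ{(y', (a, b)) : a − b ≤ δ} ≤ ∫ (1 + inf_{y ∈ ℝ} min(F1(y | y') − F0(y − δ | y'), 0)) dρ.fst(y'). That is, the unconditional distribution of the treatment effect lies between the ρ.fst-expectations of the conditional Williamson–Downs lower and upper bounds. -/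
open MeasureTheory ProbabilityTheory Filter Topology

section Aux

/-- An antitone rational sequence converging to `y` from above. -/
lemma wd_exists_rat_anti (y : ℝ) : ∃ u : ℕ → ℚ, Antitone (fun n => (u n : ℝ)) ∧
    (∀ n, y ≤ (u n : ℝ)) ∧ Tendsto (fun n => (u n : ℝ)) atTop (𝓝 y) := by
  obtain ⟨v, hv, hvy, hvlim⟩ := exists_seq_strictAnti_tendsto y
  choose q hq1 hq2 using fun n => exists_rat_btwn (hv (Nat.lt_succ_self n))
  refine ⟨q, ?_, ?_, ?_⟩
  · refine antitone_nat_of_succ_le fun n => ?_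
    exact le_of_lt ((hq2 (n + 1)).trans (hq1 n))
  · exact fun n => le_of_lt ((hvy (n + 1)).trans (hq1 n))
  · refine tendsto_of_tendsto_of_tendsto_of_le_of_le
      (tendsto_const_nhds) hvlim ?_ ?_
    · exact fun n => le_of_lt ((hvy (n + 1)).trans (hq1 n))
    · exact fun n => le_of_lt (hq2 n)

/-- Right-continuity of CDF-type functions along antitone sequences. -/
lemma wd_tendsto_cdf (μ : Measure (ℝ × ℝ)) [IsFiniteMeasure μ] {c : ℝ × ℝ → ℝ}
    (hc : Measurable c) {y : ℝ} {u : ℕ → ℝ} (hu : Antitone u) (hge : ∀ n, y ≤ u n)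
    (hlim : Tendsto u atTop (𝓝 y)) :
    Tendsto (fun n => (μ {p | c p ≤ u n}).toReal) atTop (𝓝 ((μ {p | c p ≤ y}).toReal)) := by
  have hs : ∀ n : ℕ, MeasurableSet {p : ℝ × ℝ | c p ≤ u n} :=
    fun n => measurableSet_le hc measurable_const
  have hanti : Antitone fun n : ℕ => {p : ℝ × ℝ | c p ≤ u n} :=
    fun m n h p hp => le_trans hp (hu h)
  have hint : ⋂ n, {p : ℝ × ℝ | c p ≤ u n} = {p : ℝ × ℝ | c p ≤ y} := by
    ext p
    simp only [Set.mem_iInter, Set.mem_setOf_eq]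
    constructor
    · intro h
      exact ge_of_tendsto hlim (Eventually.of_forall h)
    · intro h n
      exact h.trans (hge n)
  have h1 := tendsto_measure_iInter_atTop (μ := μ)
    (fun n => (hs n).nullMeasurableSet) hanti ⟨0, measure_ne_top μ _⟩
  rw [hint] at h1
  exact (ENNReal.tendsto_toReal (measure_ne_top μ _)).comp h1

variable (μ : Measure (ℝ × ℝ)) [IsProbabilityMeasure μ] (δ : ℝ)

lemma wd_toReal_le_one (s : Set (ℝ × ℝ)) : (μ s).toReal ≤ 1 := by
  have := ENNReal.toReal_mono (by simp) (prob_le_one (μ := μ) (s := s))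
  simpa using this

lemma wd_f_le_one (y : ℝ) :
    max ((μ {p : ℝ × ℝ | p.1 ≤ y}).toReal - (μ {p : ℝ × ℝ | p.2 ≤ y - δ}).toReal) 0 ≤ 1 := by
  refine max_le ?_ zero_le_one
  have h1 := wd_toReal_le_one μ {p : ℝ × ℝ | p.1 ≤ y}
  have h2 : (0:ℝ) ≤ (μ {p : ℝ × ℝ | p.2 ≤ y - δ}).toReal := ENNReal.toReal_nonneg
  linarith

lemma wd_g_bounds (y : ℝ) :
    -1 ≤ min ((μ {p : ℝ × ℝ | p.1 ≤ y}).toReal - (μ {p : ℝ × ℝ | p.2 ≤ y - δ}).toReal) 0 ∧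
    min ((μ {p : ℝ × ℝ | p.1 ≤ y}).toReal - (μ {p : ℝ × ℝ | p.2 ≤ y - δ}).toReal) 0 ≤ 0 := by
  constructor
  · refine le_min ?_ (by norm_num)
    have h1 := wd_toReal_le_one μ {p : ℝ × ℝ | p.2 ≤ y - δ}
    have h2 : (0:ℝ) ≤ (μ {p : ℝ × ℝ | p.1 ≤ y}).toReal := ENNReal.toReal_nonneg
    linarith
  · exact min_le_right _ _

lemma wd_sup_eq_sup_rat :
    (⨆ y : ℝ, max ((μ {p : ℝ × ℝ | p.1 ≤ y}).toReal
        - (μ {p : ℝ × ℝ | p.2 ≤ y - δ}).toReal) 0)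
      = ⨆ q : ℚ, max ((μ {p : ℝ × ℝ | p.1 ≤ (q:ℝ)}).toReal
        - (μ {p : ℝ × ℝ | p.2 ≤ (q:ℝ) - δ}).toReal) 0 := by
  have bddR : BddAbove (Set.range fun y : ℝ => max ((μ {p : ℝ × ℝ | p.1 ≤ y}).toReal
      - (μ {p : ℝ × ℝ | p.2 ≤ y - δ}).toReal) 0) := by
    refine ⟨1, ?_⟩
    rintro x ⟨y, rfl⟩
    exact wd_f_le_one μ δ y
  have bddQ : BddAbove (Set.range fun q : ℚ => max ((μ {p : ℝ × ℝ | p.1 ≤ (q:ℝ)}).toReal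
      - (μ {p : ℝ × ℝ | p.2 ≤ (q:ℝ) - δ}).toReal) 0) := by
    refine ⟨1, ?_⟩
    rintro x ⟨q, rfl⟩
    exact wd_f_le_one μ δ q
  refine le_antisymm (ciSup_le fun y => ?_) (ciSup_le fun q => le_ciSup bddR (q : ℝ))
  obtain ⟨u, hu1, hu2, hu3⟩ := wd_exists_rat_anti y
  have t1 := wd_tendsto_cdf μ (measurable_fst (α := ℝ) (β := ℝ)) hu1 hu2 hu3
  have t2 := wd_tendsto_cdf μ (measurable_snd (α := ℝ) (β := ℝ))
    (u := fun n => (u n : ℝ) - δ) (y := y - δ)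
    (fun m n h => sub_le_sub_right (hu1 h) δ) (fun n => sub_le_sub_right (hu2 n) δ)
    (hu3.sub_const δ)
  have tmax : Tendsto (fun n => max ((μ {p : ℝ × ℝ | p.1 ≤ (u n : ℝ)}).toReal
      - (μ {p : ℝ × ℝ | p.2 ≤ (u n : ℝ) - δ}).toReal) 0) atTop
      (𝓝 (max ((μ {p : ℝ × ℝ | p.1 ≤ y}).toReal
      - (μ {p : ℝ × ℝ | p.2 ≤ y - δ}).toReal) 0)) :=
    (t1.sub t2).max tendsto_const_nhds
  exact le_of_tendsto tmax (Eventually.of_forall fun n => le_ciSup bddQ (u n))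

lemma wd_inf_eq_inf_rat :
    (⨅ y : ℝ, min ((μ {p : ℝ × ℝ | p.1 ≤ y}).toReal
        - (μ {p : ℝ × ℝ | p.2 ≤ y - δ}).toReal) 0)
      = ⨅ q : ℚ, min ((μ {p : ℝ × ℝ | p.1 ≤ (q:ℝ)}).toReal
        - (μ {p : ℝ × ℝ | p.2 ≤ (q:ℝ) - δ}).toReal) 0 := by
  have bddR : BddBelow (Set.range fun y : ℝ => min ((μ {p : ℝ × ℝ | p.1 ≤ y}).toReal
      - (μ {p : ℝ × ℝ | p.2 ≤ y - δ}).toReal) 0) := by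
    refine ⟨-1, ?_⟩
    rintro x ⟨y, rfl⟩
    exact (wd_g_bounds μ δ y).1
  have bddQ : BddBelow (Set.range fun q : ℚ => min ((μ {p : ℝ × ℝ | p.1 ≤ (q:ℝ)}).toReal
      - (μ {p : ℝ × ℝ | p.2 ≤ (q:ℝ) - δ}).toReal) 0) := by
    refine ⟨-1, ?_⟩
    rintro x ⟨q, rfl⟩
    exact (wd_g_bounds μ δ q).1
  refine le_antisymm (le_ciInf fun q => ciInf_le bddR (q : ℝ)) (le_ciInf fun y => ?_)
  obtain ⟨u, hu1, hu2, hu3⟩ := wd_exists_rat_anti y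
  have t1 := wd_tendsto_cdf μ (measurable_fst (α := ℝ) (β := ℝ)) hu1 hu2 hu3
  have t2 := wd_tendsto_cdf μ (measurable_snd (α := ℝ) (β := ℝ))
    (u := fun n => (u n : ℝ) - δ) (y := y - δ)
    (fun m n h => sub_le_sub_right (hu1 h) δ) (fun n => sub_le_sub_right (hu2 n) δ)
    (hu3.sub_const δ)
  have tmin : Tendsto (fun n => min ((μ {p : ℝ × ℝ | p.1 ≤ (u n : ℝ)}).toReal
      - (μ {p : ℝ × ℝ | p.2 ≤ (u n : ℝ) - δ}).toReal) 0) atTop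
      (𝓝 (min ((μ {p : ℝ × ℝ | p.1 ≤ y}).toReal
      - (μ {p : ℝ × ℝ | p.2 ≤ y - δ}).toReal) 0)) :=
    (t1.sub t2).min tendsto_const_nhds
  exact ge_of_tendsto tmin (Eventually.of_forall fun n => ciInf_le bddQ (u n))

/-- Pointwise Williamson–Downs lower bound. -/
lemma wd_lower (y : ℝ) :
    max ((μ {p : ℝ × ℝ | p.1 ≤ y}).toReal - (μ {p : ℝ × ℝ | p.2 ≤ y - δ}).toReal) 0
      ≤ (μ {p : ℝ × ℝ | p.1 - p.2 ≤ δ}).toReal := by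
  refine max_le ?_ ENNReal.toReal_nonneg
  have hsub : {p : ℝ × ℝ | p.1 ≤ y}
      ⊆ {p : ℝ × ℝ | p.1 - p.2 ≤ δ} ∪ {p : ℝ × ℝ | p.2 ≤ y - δ} := by
    intro p hp
    simp only [Set.mem_setOf_eq, Set.mem_union] at *
    by_cases h : p.2 ≤ y - δ
    · exact Or.inr h
    · exact Or.inl (by push_neg at h; linarith)
  have h1 : μ {p : ℝ × ℝ | p.1 ≤ y}
      ≤ μ {p : ℝ × ℝ | p.1 - p.2 ≤ δ} + μ {p : ℝ × ℝ | p.2 ≤ y - δ} :=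
    (measure_mono hsub).trans (measure_union_le _ _)
  have h2 := ENNReal.toReal_mono
    (ENNReal.add_ne_top.2 ⟨measure_ne_top μ _, measure_ne_top μ _⟩) h1
  rw [ENNReal.toReal_add (measure_ne_top μ _) (measure_ne_top μ _)] at h2
  linarith

/-- Pointwise Williamson–Downs upper bound. -/
lemma wd_upper (y : ℝ) :
    (μ {p : ℝ × ℝ | p.1 - p.2 ≤ δ}).toReal
      ≤ 1 + min ((μ {p : ℝ × ℝ | p.1 ≤ y}).toReal
          - (μ {p : ℝ × ℝ | p.2 ≤ y - δ}).toReal) 0 := by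
  have hB : MeasurableSet {p : ℝ × ℝ | p.2 ≤ y - δ} :=
    measurableSet_le measurable_snd measurable_const
  have hsub : {p : ℝ × ℝ | p.1 - p.2 ≤ δ}
      ⊆ {p : ℝ × ℝ | p.1 ≤ y} ∪ {p : ℝ × ℝ | p.2 ≤ y - δ}ᶜ := by
    intro p hp
    simp only [Set.mem_setOf_eq, Set.mem_union, Set.mem_compl_iff] at *
    by_cases h : p.2 ≤ y - δ
    · exact Or.inl (by linarith)
    · exact Or.inr h
  have h1 : μ {p : ℝ × ℝ | p.1 - p.2 ≤ δ}
      ≤ μ {p : ℝ × ℝ | p.1 ≤ y} + μ {p : ℝ × ℝ | p.2 ≤ y - δ}ᶜ :=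
    (measure_mono hsub).trans (measure_union_le _ _)
  have h2 := ENNReal.toReal_mono
    (ENNReal.add_ne_top.2 ⟨measure_ne_top μ _, measure_ne_top μ _⟩) h1
  rw [ENNReal.toReal_add (measure_ne_top μ _) (measure_ne_top μ _)] at h2
  have hc : (μ {p : ℝ × ℝ | p.2 ≤ y - δ}ᶜ).toReal
      = 1 - (μ {p : ℝ × ℝ | p.2 ≤ y - δ}).toReal := by
    rw [measure_compl hB (measure_ne_top μ _), measure_univ,
      ENNReal.toReal_sub_of_le prob_le_one ENNReal.one_ne_top]
    simp
  rw [hc] at h2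
  have hle1 := wd_toReal_le_one μ {p : ℝ × ℝ | p.1 - p.2 ≤ δ}
  rcases le_total ((μ {p : ℝ × ℝ | p.1 ≤ y}).toReal
      - (μ {p : ℝ × ℝ | p.2 ≤ y - δ}).toReal) 0 with h | h
  · rw [min_eq_left h]; linarith
  · rw [min_eq_right h]; linarith

end Aux

/-- **Integrated Williamson–Downs bounds on the distribution of the treatment effect**
(Theorem 2 of the paper).  For a probability measure `ρ` on `ℝ × (ℝ × ℝ)` with first marginal
`ρ.fst` and disintegration kernel `K = ρ.condKernel`, assuming the conditional CDF of the
untreated outcome (third coordinate) is almost everywhere continuous, the unconditional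
distribution of the treatment effect lies between the `ρ.fst`-expectations of the conditional
Williamson–Downs lower and upper bounds. -/
theorem integrated_williamson_downs_bounds
    (ρ : Measure (ℝ × ℝ × ℝ)) [IsProbabilityMeasure ρ]
    (hcont : ∀ᵐ y' ∂ρ.fst,
      Continuous fun y0 : ℝ => (ρ.condKernel y' {p : ℝ × ℝ | p.2 ≤ y0}).toReal)
    (δ : ℝ) :
    (∫ y', ⨆ y : ℝ, max ((ρ.condKernel y' {p : ℝ × ℝ | p.1 ≤ y}).toReal
          - (ρ.condKernel y' {p : ℝ × ℝ | p.2 ≤ y - δ}).toReal) 0 ∂ρ.fst)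
        ≤ (ρ {q : ℝ × ℝ × ℝ | q.2.1 - q.2.2 ≤ δ}).toReal
    ∧ (ρ {q : ℝ × ℝ × ℝ | q.2.1 - q.2.2 ≤ δ}).toReal
        ≤ ∫ y', (1 + ⨅ y : ℝ, min ((ρ.condKernel y' {p : ℝ × ℝ | p.1 ≤ y}).toReal
              - (ρ.condKernel y' {p : ℝ × ℝ | p.2 ≤ y - δ}).toReal) 0) ∂ρ.fst := by
  have hT : MeasurableSet {p : ℝ × ℝ | p.1 - p.2 ≤ δ} :=
    measurableSet_le (measurable_fst.sub measurable_snd) measurable_const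
  have hT' : MeasurableSet {q : ℝ × ℝ × ℝ | q.2.1 - q.2.2 ≤ δ} :=
    measurableSet_le (measurable_snd.fst.sub measurable_snd.snd) measurable_const
  have hA : ∀ y : ℝ, MeasurableSet {p : ℝ × ℝ | p.1 ≤ y} :=
    fun y => measurableSet_le measurable_fst measurable_const
  have hB : ∀ y : ℝ, MeasurableSet {p : ℝ × ℝ | p.2 ≤ y} :=
    fun y => measurableSet_le measurable_snd measurable_const
  have hTm : Measurable fun y' => (ρ.condKernel y' {p : ℝ × ℝ | p.1 - p.2 ≤ δ}).toReal :=
    (Kernel.measurable_coe _ hT).ennreal_toReal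
  -- disintegration
  have key : (ρ {q : ℝ × ℝ × ℝ | q.2.1 - q.2.2 ≤ δ}).toReal
      = ∫ y', (ρ.condKernel y' {p : ℝ × ℝ | p.1 - p.2 ≤ δ}).toReal ∂ρ.fst := by
    rw [integral_toReal (Kernel.measurable_coe _ hT).aemeasurable
      (ae_of_all _ fun y' => measure_lt_top _ _)]
    congr 1
    conv_lhs => rw [← ρ.disintegrate ρ.condKernel]
    rw [Measure.compProd_apply hT']
    rfl
  -- integrability
  have int_T : Integrable (fun y' =>
      (ρ.condKernel y' {p : ℝ × ℝ | p.1 - p.2 ≤ δ}).toReal) ρ.fst := by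
    refine ⟨hTm.aestronglyMeasurable, HasFiniteIntegral.of_bounded (C := 1) ?_⟩
    refine ae_of_all _ fun y' => ?_
    rw [Real.norm_eq_abs, abs_of_nonneg ENNReal.toReal_nonneg]
    exact wd_toReal_le_one _ _
  have msupQ : Measurable fun y' => ⨆ q : ℚ,
      max ((ρ.condKernel y' {p : ℝ × ℝ | p.1 ≤ (q:ℝ)}).toReal
        - (ρ.condKernel y' {p : ℝ × ℝ | p.2 ≤ (q:ℝ) - δ}).toReal) 0 := by
    refine Measurable.iSup fun q => ?_
    exact ((Kernel.measurable_coe _ (hA _)).ennreal_toReal.sub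
      (Kernel.measurable_coe _ (hB _)).ennreal_toReal).max measurable_const
  have minfQ : Measurable fun y' => (1 : ℝ) + ⨅ q : ℚ,
      min ((ρ.condKernel y' {p : ℝ × ℝ | p.1 ≤ (q:ℝ)}).toReal
        - (ρ.condKernel y' {p : ℝ × ℝ | p.2 ≤ (q:ℝ) - δ}).toReal) 0 := by
    refine measurable_const.add (Measurable.iInf fun q => ?_)
    exact ((Kernel.measurable_coe _ (hA _)).ennreal_toReal.sub
      (Kernel.measurable_coe _ (hB _)).ennreal_toReal).min measurable_const
  have int_supQ : Integrable (fun y' => ⨆ q : ℚ,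
      max ((ρ.condKernel y' {p : ℝ × ℝ | p.1 ≤ (q:ℝ)}).toReal
        - (ρ.condKernel y' {p : ℝ × ℝ | p.2 ≤ (q:ℝ) - δ}).toReal) 0) ρ.fst := by
    refine ⟨msupQ.aestronglyMeasurable, HasFiniteIntegral.of_bounded (C := 1) ?_⟩
    refine ae_of_all _ fun y' => ?_
    rw [Real.norm_eq_abs, abs_le]
    have h0 : (0:ℝ) ≤ ⨆ q : ℚ,
        max ((ρ.condKernel y' {p : ℝ × ℝ | p.1 ≤ (q:ℝ)}).toReal
          - (ρ.condKernel y' {p : ℝ × ℝ | p.2 ≤ (q:ℝ) - δ}).toReal) 0 :=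
      le_ciSup_of_le ⟨1, by rintro x ⟨q, rfl⟩; exact wd_f_le_one _ δ _⟩ (0 : ℚ)
        (le_max_right _ _)
    constructor
    · linarith
    · refine ciSup_le fun q => wd_f_le_one _ δ _
  have int_infQ : Integrable (fun y' => (1 : ℝ) + ⨅ q : ℚ,
      min ((ρ.condKernel y' {p : ℝ × ℝ | p.1 ≤ (q:ℝ)}).toReal
        - (ρ.condKernel y' {p : ℝ × ℝ | p.2 ≤ (q:ℝ) - δ}).toReal) 0) ρ.fst := by
    refine ⟨minfQ.aestronglyMeasurable, HasFiniteIntegral.of_bounded (C := 1) ?_⟩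
    refine ae_of_all _ fun y' => ?_
    rw [Real.norm_eq_abs, abs_le]
    have hlo : -1 ≤ ⨅ q : ℚ,
        min ((ρ.condKernel y' {p : ℝ × ℝ | p.1 ≤ (q:ℝ)}).toReal
          - (ρ.condKernel y' {p : ℝ × ℝ | p.2 ≤ (q:ℝ) - δ}).toReal) 0 :=
      le_ciInf fun q => (wd_g_bounds _ δ _).1
    have hhi : (⨅ q : ℚ,
        min ((ρ.condKernel y' {p : ℝ × ℝ | p.1 ≤ (q:ℝ)}).toReal
          - (ρ.condKernel y' {p : ℝ × ℝ | p.2 ≤ (q:ℝ) - δ}).toReal) 0) ≤ 0 := by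
      refine le_trans (ciInf_le ⟨-1, ?_⟩ (0 : ℚ)) (wd_g_bounds _ δ _).2
      rintro x ⟨q, rfl⟩; exact (wd_g_bounds _ δ _).1
    constructor <;> linarith
  constructor
  · calc (∫ y', ⨆ y : ℝ, max ((ρ.condKernel y' {p : ℝ × ℝ | p.1 ≤ y}).toReal
          - (ρ.condKernel y' {p : ℝ × ℝ | p.2 ≤ y - δ}).toReal) 0 ∂ρ.fst)
        = ∫ y', ⨆ q : ℚ, max ((ρ.condKernel y' {p : ℝ × ℝ | p.1 ≤ (q:ℝ)}).toReal
          - (ρ.condKernel y' {p : ℝ × ℝ | p.2 ≤ (q:ℝ) - δ}).toReal) 0 ∂ρ.fst :=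
          integral_congr_ae (ae_of_all _ fun y' => wd_sup_eq_sup_rat _ δ)
      _ ≤ ∫ y', (ρ.condKernel y' {p : ℝ × ℝ | p.1 - p.2 ≤ δ}).toReal ∂ρ.fst := by
          refine integral_mono int_supQ int_T fun y' => ?_
          dsimp only
          rw [← wd_sup_eq_sup_rat _ δ]
          exact ciSup_le fun y => wd_lower _ δ y
      _ = (ρ {q : ℝ × ℝ × ℝ | q.2.1 - q.2.2 ≤ δ}).toReal := key.symm
  · calc (ρ {q : ℝ × ℝ × ℝ | q.2.1 - q.2.2 ≤ δ}).toReal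
        = ∫ y', (ρ.condKernel y' {p : ℝ × ℝ | p.1 - p.2 ≤ δ}).toReal ∂ρ.fst := key
      _ ≤ ∫ y', ((1 : ℝ) + ⨅ q : ℚ,
          min ((ρ.condKernel y' {p : ℝ × ℝ | p.1 ≤ (q:ℝ)}).toReal
            - (ρ.condKernel y' {p : ℝ × ℝ | p.2 ≤ (q:ℝ) - δ}).toReal) 0) ∂ρ.fst := by
          refine integral_mono int_T int_infQ fun y' => ?_
          dsimp only
          rw [← wd_inf_eq_inf_rat _ δ]
          have h : (ρ.condKernel y' {p : ℝ × ℝ | p.1 - p.2 ≤ δ}).toReal - 1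
              ≤ ⨅ y : ℝ, min ((ρ.condKernel y' {p : ℝ × ℝ | p.1 ≤ y}).toReal
                - (ρ.condKernel y' {p : ℝ × ℝ | p.2 ≤ y - δ}).toReal) 0 :=
            le_ciInf fun y => by linarith [wd_upper (ρ.condKernel y') δ y]
          linarith
      _ = ∫ y', (1 + ⨅ y : ℝ, min ((ρ.condKernel y' {p : ℝ × ℝ | p.1 ≤ y}).toReal
            - (ρ.condKernel y' {p : ℝ × ℝ | p.2 ≤ y - δ}).toReal) 0) ∂ρ.fst :=
          integral_congr_ae (ae_of_all _ fun y' => by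
            dsimp only
            rw [wd_inf_eq_inf_rat (ρ.condKernel y') δ])
end

section
/- Let ρ and ρ' be probability measures on ℝ × ℝ, interpreted as the laws of pairs (W, X) and (V, U) respectively, whose marginal CDFs F_W, F_X (for ρ) and F_V, F_U (for ρ') are all continuous and strictly increasing on ℝ. Suppose the two pairs have equal copulas, i.e., the pushforward of ρ under (w, x) ↦ (F_W(w), F_X(x)) equals the pushforward of ρ' under (v, u) ↦ (F_V(v), F_U(u)). Then for ρ.fst-almost every w and every x ∈ ℝ: condCDF ρ w x = condCDF ρ' (F_V^{-1}(F_W(w))) (F_U^{-1}(F_X(x))), where F^{-1}(τ) = inf{z : F(z) ≥ τ} is the quantile function. -/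
open MeasureTheory ProbabilityTheory Filter

/-- The CDF of the first marginal of a measure on `ℝ × ℝ`. -/
noncomputable def fstCDF (ρ : Measure (ℝ × ℝ)) : ℝ → ℝ :=
  fun w => (ρ.fst (Set.Iic w)).toReal

/-- The CDF of the second marginal of a measure on `ℝ × ℝ`. -/
noncomputable def sndCDF (ρ : Measure (ℝ × ℝ)) : ℝ → ℝ :=
  fun x => (ρ.snd (Set.Iic x)).toReal

/-- The quantile function (generalized inverse) of a function `F : ℝ → ℝ`:
`F⁻¹(τ) = inf {z | F z ≥ τ}`. -/
noncomputable def quantileFn (F : ℝ → ℝ) (τ : ℝ) : ℝ :=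
  sInf {z : ℝ | τ ≤ F z}

lemma quantileFn_apply_self {F : ℝ → ℝ} (hF : StrictMono F) (v : ℝ) :
    quantileFn F (F v) = v := by
  have h : {z : ℝ | F v ≤ F z} = Set.Ici v := by
    ext z; simp [hF.le_iff_le]
  rw [quantileFn, h, csInf_Ici]

lemma cdf_of_prob_lt_one (μ : Measure ℝ) [IsProbabilityMeasure μ]
    (hm : StrictMono (fun w => (μ (Set.Iic w)).toReal)) (v : ℝ) :
    (μ (Set.Iic v)).toReal < 1 := by
  by_contra hlt
  push_neg at hlt
  have h1 : (μ (Set.Iic (v + 1))).toReal ≤ 1 := by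
    rw [← ENNReal.toReal_one]
    exact ENNReal.toReal_mono (by simp) prob_le_one
  have h2 := hm (show v < v + 1 by linarith)
  simp only at h2
  linarith

lemma cdf_of_prob_pos (μ : Measure ℝ) [IsProbabilityMeasure μ]
    (hm : StrictMono (fun w => (μ (Set.Iic w)).toReal)) (v : ℝ) :
    0 < (μ (Set.Iic v)).toReal := by
  by_contra hlt
  push_neg at hlt
  have h1 : (0:ℝ) ≤ (μ (Set.Iic (v - 1))).toReal := ENNReal.toReal_nonneg
  have h2 := hm (show v - 1 < v by linarith)
  simp only at h2
  linarith

lemma exists_cdf_eq (μ : Measure ℝ) [IsProbabilityMeasure μ]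
    (hc : Continuous (fun w => (μ (Set.Iic w)).toReal)) {τ : ℝ}
    (h0 : 0 < τ) (h1 : τ < 1) : ∃ v, (μ (Set.Iic v)).toReal = τ := by
  set F := fun w => (μ (Set.Iic w)).toReal with hF
  have hFc : F = ProbabilityTheory.cdf μ := by
    funext w; rw [hF]; exact (cdf_eq_real μ w).symm
  have hbot : Tendsto F atBot (nhds 0) := by
    rw [hFc]; exact tendsto_cdf_atBot μ
  have htop : Tendsto F atTop (nhds 1) := by
    rw [hFc]; exact tendsto_cdf_atTop μ
  obtain ⟨a, ha⟩ : ∃ a, F a < τ := (hbot.eventually (eventually_lt_nhds h0)).exists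
  obtain ⟨b, hb⟩ : ∃ b, τ < F b := (htop.eventually (eventually_gt_nhds h1)).exists
  have hab : a ≤ b := by
    by_contra hba
    push_neg at hba
    have hmono : Monotone F := fun x y hxy =>
      ENNReal.toReal_mono (by simp) (measure_mono (Set.Iic_subset_Iic.2 hxy))
    have := hmono hba.le
    linarith
  obtain ⟨v, _, hv⟩ :=
    intermediate_value_Icc hab hc.continuousOn (Set.mem_Icc.2 ⟨ha.le, hb.le⟩)
  exact ⟨v, hv⟩

/-- **Lemma 1 of the paper (Model 1)**: identification of the conditional distribution of the
untreated potential outcome.  If `ρ` (the law of `(Y_{1,t−1}, Y_{0,t})` for the target group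
`D_t = (1,1,1)`) and `ρ'` (the law of `(Y_{1,t−2}, Y_{0,t−1})` for the copula recovery group
`D_t = (1,0,1)`) have equal copulas and all marginal CDFs are continuous and strictly
increasing, then for `ρ.fst`-almost every `w` and every `x`, the conditional CDF of the second
coordinate given the first satisfies the stated identification formula. -/
theorem condCDF_eq_of_equal_copulas
    (ρ ρ' : Measure (ℝ × ℝ)) [IsProbabilityMeasure ρ] [IsProbabilityMeasure ρ']
    (hWc : Continuous (fstCDF ρ)) (hWm : StrictMono (fstCDF ρ))
    (hXc : Continuous (sndCDF ρ)) (hXm : StrictMono (sndCDF ρ))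
    (hVc : Continuous (fstCDF ρ')) (hVm : StrictMono (fstCDF ρ'))
    (hUc : Continuous (sndCDF ρ')) (hUm : StrictMono (sndCDF ρ'))
    (hcop : Measure.map (fun p : ℝ × ℝ => (fstCDF ρ p.1, sndCDF ρ p.2)) ρ
          = Measure.map (fun p : ℝ × ℝ => (fstCDF ρ' p.1, sndCDF ρ' p.2)) ρ') :
    ∀ᵐ w ∂ρ.fst, ∀ x : ℝ,
      condCDF ρ w x
        = condCDF ρ' (quantileFn (fstCDF ρ') (fstCDF ρ w))
            (quantileFn (sndCDF ρ') (sndCDF ρ x)) := by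
  classical
  set g : ℝ → ℝ := fun w => quantileFn (fstCDF ρ') (fstCDF ρ w) with hg_def
  set h : ℝ → ℝ := fun x => quantileFn (sndCDF ρ') (sndCDF ρ x) with hh_def
  -- the composition identities F_V ∘ g = F_W and F_U ∘ h = F_X
  have hVg : ∀ w, fstCDF ρ' (g w) = fstCDF ρ w := by
    intro w
    obtain ⟨v, hv⟩ := exists_cdf_eq ρ'.fst hVc
      (cdf_of_prob_pos ρ.fst hWm w) (cdf_of_prob_lt_one ρ.fst hWm w)
    have hgv : g w = v := by
      rw [hg_def]
      simp only
      rw [show fstCDF ρ w = fstCDF ρ' v from hv.symm]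
      exact quantileFn_apply_self hVm v
    rw [hgv]; exact hv
  have hUh : ∀ x, sndCDF ρ' (h x) = sndCDF ρ x := by
    intro x
    obtain ⟨u, hu⟩ := exists_cdf_eq ρ'.snd hUc
      (cdf_of_prob_pos ρ.snd hXm x) (cdf_of_prob_lt_one ρ.snd hXm x)
    have hhu : h x = u := by
      rw [hh_def]
      simp only
      rw [show sndCDF ρ x = sndCDF ρ' u from hu.symm]
      exact quantileFn_apply_self hUm u
    rw [hhu]; exact hu
  -- strict monotonicity of g and h
  have hgm : StrictMono g := by
    intro w w' hw
    have hlt := hWm hw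
    rw [← hVg w, ← hVg w'] at hlt
    exact hVm.lt_iff_lt.mp hlt
  have hhm : StrictMono h := by
    intro x x' hx
    have hlt := hXm hx
    rw [← hUh x, ← hUh x'] at hlt
    exact hUm.lt_iff_lt.mp hlt
  have hgmeas : Measurable g := hgm.monotone.measurable
  -- surjectivity of h, hence continuity
  have hhsurj : Function.Surjective h := by
    intro u
    obtain ⟨x, hx⟩ := exists_cdf_eq ρ.snd hXc
      (cdf_of_prob_pos ρ'.snd hUm u) (cdf_of_prob_lt_one ρ'.snd hUm u)
    refine ⟨x, ?_⟩
    rw [hh_def]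
    simp only
    rw [show sndCDF ρ x = sndCDF ρ' u from hx]
    exact quantileFn_apply_self hUm u
  have hhc : Continuous h := by
    have hcont := (StrictMono.orderIsoOfSurjective h hhm hhsurj).continuous
    rwa [StrictMono.coe_orderIsoOfSurjective] at hcont
  have hgsurj : Function.Surjective g := by
    intro v
    obtain ⟨w, hw⟩ := exists_cdf_eq ρ.fst hWc
      (cdf_of_prob_pos ρ'.fst hVm v) (cdf_of_prob_lt_one ρ'.fst hVm v)
    refine ⟨w, ?_⟩
    rw [hg_def]
    simp only
    rw [show fstCDF ρ w = fstCDF ρ' v from hw]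
    exact quantileFn_apply_self hVm v
  -- pushforward of the first marginal
  have hmap : Measure.map g ρ.fst = ρ'.fst := by
    haveI : IsProbabilityMeasure (Measure.map g ρ.fst) :=
      Measure.isProbabilityMeasure_map hgmeas.aemeasurable
    refine Measure.ext_of_Iic _ _ (fun v => ?_)
    obtain ⟨w₀, hw₀⟩ := hgsurj v
    rw [Measure.map_apply hgmeas measurableSet_Iic]
    have hpre : g ⁻¹' Set.Iic v = Set.Iic w₀ := by
      ext z
      simp only [Set.mem_preimage, Set.mem_Iic, ← hw₀]
      exact hgm.le_iff_le
    rw [hpre]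
    have hval : fstCDF ρ' v = fstCDF ρ w₀ := by rw [← hw₀]; exact hVg w₀
    have := hval.symm
    rw [fstCDF, fstCDF] at this
    exact (ENNReal.toReal_eq_toReal_iff' (measure_ne_top _ _) (measure_ne_top _ _)).mp this
  -- the rectangle identity from equality of copulas
  have hΦmeas : Measurable (fun p : ℝ × ℝ => (fstCDF ρ p.1, sndCDF ρ p.2)) :=
    ((hWc.comp continuous_fst).prodMk (hXc.comp continuous_snd)).measurable
  have hΨmeas : Measurable (fun p : ℝ × ℝ => (fstCDF ρ' p.1, sndCDF ρ' p.2)) :=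
    ((hVc.comp continuous_fst).prodMk (hUc.comp continuous_snd)).measurable
  have hrect : ∀ a x : ℝ,
      ρ (Set.Iic a ×ˢ Set.Iic x) = ρ' (Set.Iic (g a) ×ˢ Set.Iic (h x)) := by
    intro a x
    have hS : MeasurableSet (Set.Iic (fstCDF ρ a) ×ˢ Set.Iic (sndCDF ρ x)) :=
      measurableSet_Iic.prod measurableSet_Iic
    have h1 : (fun p : ℝ × ℝ => (fstCDF ρ p.1, sndCDF ρ p.2)) ⁻¹'
        (Set.Iic (fstCDF ρ a) ×ˢ Set.Iic (sndCDF ρ x)) = Set.Iic a ×ˢ Set.Iic x := by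
      ext p
      simp only [Set.mem_preimage, Set.mem_prod, Set.mem_Iic]
      rw [hWm.le_iff_le, hXm.le_iff_le]
    have h2 : (fun p : ℝ × ℝ => (fstCDF ρ' p.1, sndCDF ρ' p.2)) ⁻¹'
        (Set.Iic (fstCDF ρ a) ×ˢ Set.Iic (sndCDF ρ x))
        = Set.Iic (g a) ×ˢ Set.Iic (h x) := by
      ext p
      simp only [Set.mem_preimage, Set.mem_prod, Set.mem_Iic]
      rw [← hVg a, ← hUh x, hVm.le_iff_le, hUm.le_iff_le]
    have hc := congrArg (fun μ : Measure (ℝ × ℝ) =>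
      μ (Set.Iic (fstCDF ρ a) ×ˢ Set.Iic (sndCDF ρ x))) hcop
    rw [Measure.map_apply hΦmeas hS, Measure.map_apply hΨmeas hS, h1, h2] at hc
    exact hc
  -- a.e. equality for each fixed x
  have key : ∀ x : ℝ, ∀ᵐ w ∂ρ.fst, condCDF ρ w x = condCDF ρ' (g w) (h x) := by
    intro x
    set f1 : ℝ → ENNReal := fun w => ENNReal.ofReal (condCDF ρ w x) with hf1_def
    set f2 : ℝ → ENNReal := fun w => ENNReal.ofReal (condCDF ρ' (g w) (h x)) with hf2_def
    have hf1 : Measurable f1 := (measurable_condCDF ρ x).ennreal_ofReal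
    have hf2 : Measurable f2 :=
      ((measurable_condCDF ρ' (h x)).comp hgmeas).ennreal_ofReal
    have hbd1 : ∫⁻ w, f1 w ∂ρ.fst ≠ ⊤ := by
      refine ne_of_lt (lt_of_le_of_lt (lintegral_mono (fun w => ?_)) (by simp : (∫⁻ _, 1 ∂ρ.fst) < ⊤))
      exact ENNReal.ofReal_le_one.mpr (condCDF_le_one ρ w x)
    have hwd : ρ.fst.withDensity f1 = ρ.fst.withDensity f2 := by
      haveI : IsFiniteMeasure (ρ.fst.withDensity f1) := isFiniteMeasure_withDensity hbd1
      refine Measure.ext_of_Iic _ _ (fun a => ?_)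
      rw [withDensity_apply _ measurableSet_Iic, withDensity_apply _ measurableSet_Iic]
      rw [hf1_def]
      rw [setLIntegral_condCDF ρ x measurableSet_Iic]
      have hch : ∫⁻ w in Set.Iic a, f2 w ∂ρ.fst
          = ∫⁻ v in Set.Iic (g a), ENNReal.ofReal (condCDF ρ' v (h x))
              ∂(Measure.map g ρ.fst) := by
        rw [setLIntegral_map measurableSet_Iic
          ((measurable_condCDF ρ' (h x)).ennreal_ofReal) hgmeas]
        have hpre : g ⁻¹' Set.Iic (g a) = Set.Iic a := by
          ext z
          simp only [Set.mem_preimage, Set.mem_Iic]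
          exact hgm.le_iff_le
        rw [hpre, hf2_def]
      rw [hch, hmap, setLIntegral_condCDF ρ' (h x) measurableSet_Iic, ← hrect a x]
    have hae : f1 =ᵐ[ρ.fst] f2 := by
      refine ae_eq_of_forall_setLIntegral_eq_of_sigmaFinite hf1 hf2 (fun s hs _ => ?_)
      rw [← withDensity_apply _ hs, ← withDensity_apply _ hs, hwd]
    filter_upwards [hae] with w hw
    exact (ENNReal.ofReal_eq_ofReal_iff (condCDF_nonneg ρ w x)
      (condCDF_nonneg ρ' (g w) (h x))).mp hw
  -- extend from rationals to all reals
  have hqae : ∀ᵐ w ∂ρ.fst, ∀ q : ℚ, condCDF ρ w q = condCDF ρ' (g w) (h q) :=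
    ae_all_iff.mpr fun q => key q
  filter_upwards [hqae] with w hw
  intro x
  have hex : ∀ n : ℕ, ∃ r : ℚ, x < r ∧ (r : ℝ) < x + 1 / (n + 1) := fun n =>
    exists_rat_btwn (lt_add_of_pos_right x (by positivity))
  choose q hq1 hq2 using hex
  have hupper : Tendsto (fun n : ℕ => x + 1 / (n + 1 : ℝ)) atTop (nhds x) := by
    have := tendsto_one_div_add_atTop_nhds_zero_nat (𝕜 := ℝ)
    simpa using tendsto_const_nhds.add this
  have hqt : Tendsto (fun n => (q n : ℝ)) atTop (nhds x) :=
    tendsto_of_tendsto_of_tendsto_of_le_of_le tendsto_const_nhds hupper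
      (fun n => (hq1 n).le) (fun n => (hq2 n).le)
  have hqt' : Tendsto (fun n => (q n : ℝ)) atTop (nhdsWithin x (Set.Ici x)) :=
    tendsto_nhdsWithin_of_tendsto_nhds_of_eventually_within _ hqt
      (Eventually.of_forall fun n => (hq1 n).le)
  have hL : Tendsto (fun n => condCDF ρ w (q n)) atTop (nhds (condCDF ρ w x)) :=
    ((condCDF ρ w).right_continuous x).tendsto.comp hqt'
  have hht : Tendsto (fun n => h (q n)) atTop (nhdsWithin (h x) (Set.Ici (h x))) := by
    refine tendsto_nhdsWithin_of_tendsto_nhds_of_eventually_within _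
      (hhc.continuousAt.tendsto.comp hqt) (Eventually.of_forall fun n => ?_)
    exact hhm.monotone (hq1 n).le
  have hR : Tendsto (fun n => condCDF ρ' (g w) (h (q n))) atTop
      (nhds (condCDF ρ' (g w) (h x))) :=
    ((condCDF ρ' (g w)).right_continuous (h x)).tendsto.comp hht
  have heq : (fun n => condCDF ρ w (q n)) = fun n => condCDF ρ' (g w) (h (q n)) :=
    funext fun n => hw (q n)
  show condCDF ρ w x = condCDF ρ' (g w) (h x)
  exact tendsto_nhds_unique hL (heq ▸ hR)
end

section
/- Let ρ and ρ' be probability measures on ℝ × ℝ, interpreted as the laws of the pair (Y_{1,t−1}, Y_{0,t}) under two different conditioning events (the treated group D_t = (1,1,1) and the untreated group D_t = (1,1,0)), whose marginal CDFs F_W, F_X (for ρ) and F_V, F_U (for ρ') are all continuous and strictly increasing on ℝ. Suppose the two pairs have equal copulas, i.e., the pushforward of ρ under (w, x) ↦ (F_W(w), F_X(x)) equals the pushforward of ρ' under (v, u) ↦ (F_V(v), F_U(u)). Then for ρ.fst-almost every w and every x ∈ ℝ: condCDF ρ w x = condCDF ρ' (F_V^{-1}(F_W(w))) (F_U^{-1}(F_X(x))),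 where F^{-1}(τ) = inf{z : F(z) ≥ τ} is the quantile function. -/
open MeasureTheory ProbabilityTheory

open Filter Topology Set in
lemma aux_mem_Ioo {F : ℝ → ℝ} (hm : StrictMono F)
    (h0 : Tendsto F atBot (𝓝 0)) (h1 : Tendsto F atTop (𝓝 1)) (x : ℝ) :
    F x ∈ Set.Ioo (0:ℝ) 1 := by
  constructor
  · have h : (0:ℝ) ≤ F (x - 1) :=
      le_of_tendsto h0 (eventually_atBot.2 ⟨x - 1, fun y hy => hm.le_iff_le.2 hy⟩)
    linarith [hm (show x - 1 < x by linarith)]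
  · have h : F (x + 1) ≤ 1 :=
      ge_of_tendsto h1 (eventually_atTop.2 ⟨x + 1, fun y hy => hm.le_iff_le.2 hy⟩)
    linarith [hm (show x < x + 1 by linarith)]

lemma aux_quantile_comp {F : ℝ → ℝ} (hm : StrictMono F) (z : ℝ) :
    quantileFn F (F z) = z := by
  unfold quantileFn
  have h : {y : ℝ | F z ≤ F y} = Set.Ici z := by ext y; simp [hm.le_iff_le]
  rw [h, csInf_Ici]

open Filter Topology Set in
lemma aux_surj {F : ℝ → ℝ} (hm : StrictMono F) (hc : Continuous F)
    (h0 : Tendsto F atBot (𝓝 0)) (h1 : Tendsto F atTop (𝓝 1)) {τ : ℝ}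
    (hτ : τ ∈ Set.Ioo (0:ℝ) 1) : ∃ z, F z = τ := by
  obtain ⟨a, ha⟩ : ∃ a, F a < τ := (h0.eventually_lt_const hτ.1).exists
  obtain ⟨b, hb⟩ : ∃ b, τ < F b := (h1.eventually_const_lt hτ.2).exists
  have hmem : τ ∈ Set.Icc (F (min a b)) (F (max a b)) :=
    ⟨le_trans (hm.monotone (min_le_left a b)) ha.le,
     le_trans hb.le (hm.monotone (le_max_right a b))⟩
  obtain ⟨z, _, hz⟩ := intermediate_value_Icc (min_le_max) hc.continuousOn hmem
  exact ⟨z, hz⟩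

open Filter Topology Set in
lemma aux_F_quantile {F : ℝ → ℝ} (hm : StrictMono F) (hc : Continuous F)
    (h0 : Tendsto F atBot (𝓝 0)) (h1 : Tendsto F atTop (𝓝 1)) {τ : ℝ}
    (hτ : τ ∈ Set.Ioo (0:ℝ) 1) : F (quantileFn F τ) = τ := by
  obtain ⟨z, hz⟩ := aux_surj hm hc h0 h1 hτ
  rw [← hz, aux_quantile_comp hm]

open Filter Topology Set in
lemma aux_tendsto_atBot {μ : Measure ℝ} [IsProbabilityMeasure μ] :
    Tendsto (fun w => (μ (Set.Iic w)).toReal) atBot (𝓝 0) := by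
  have h : (fun w => (μ (Set.Iic w)).toReal) = cdf μ := by
    funext w; exact (cdf_eq_real μ w).symm
  rw [h]; exact tendsto_cdf_atBot μ

open Filter Topology Set in
lemma aux_tendsto_atTop {μ : Measure ℝ} [IsProbabilityMeasure μ] :
    Tendsto (fun w => (μ (Set.Iic w)).toReal) atTop (𝓝 1) := by
  have h : (fun w => (μ (Set.Iic w)).toReal) = cdf μ := by
    funext w; exact (cdf_eq_real μ w).symm
  rw [h]; exact tendsto_cdf_atTop μ

open Filter Topology Set in
/-- **Lemma 4 of the paper (Model 2)**: identification of the conditional distribution of the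
untreated potential outcome under the group-wise copula equality Assumption GCE (II).  Here `ρ`
is the law of `(Y_{1,t−1}, Y_{0,t})` for the treated group `D_t = (1,1,1)` and `ρ'` that of
`(Y_{1,t−1}, Y_{0,t})` for the untreated group `D_t = (1,1,0)`.  If the two pairs have equal
copulas and all marginal CDFs are continuous and strictly increasing, then for `ρ.fst`-almost
every `w` and every `x`, the conditional CDF of the second coordinate given the first satisfies
the stated identification formula. -/
theorem condCDF_eq_of_equal_copulas_model2
    (ρ ρ' : Measure (ℝ × ℝ)) [IsProbabilityMeasure ρ] [IsProbabilityMeasure ρ']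
    (hWc : Continuous (fstCDF ρ)) (hWm : StrictMono (fstCDF ρ))
    (hXc : Continuous (sndCDF ρ)) (hXm : StrictMono (sndCDF ρ))
    (hVc : Continuous (fstCDF ρ')) (hVm : StrictMono (fstCDF ρ'))
    (hUc : Continuous (sndCDF ρ')) (hUm : StrictMono (sndCDF ρ'))
    (hcop : Measure.map (fun p : ℝ × ℝ => (fstCDF ρ p.1, sndCDF ρ p.2)) ρ
          = Measure.map (fun p : ℝ × ℝ => (fstCDF ρ' p.1, sndCDF ρ' p.2)) ρ') :
    ∀ᵐ w ∂ρ.fst, ∀ x : ℝ,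
      condCDF ρ w x
        = condCDF ρ' (quantileFn (fstCDF ρ') (fstCDF ρ w))
            (quantileFn (sndCDF ρ') (sndCDF ρ x)) := by
  -- tendsto facts for the four CDFs
  have hW0 : Tendsto (fstCDF ρ) atBot (𝓝 0) := aux_tendsto_atBot
  have hW1 : Tendsto (fstCDF ρ) atTop (𝓝 1) := aux_tendsto_atTop
  have hX0 : Tendsto (sndCDF ρ) atBot (𝓝 0) := aux_tendsto_atBot
  have hX1 : Tendsto (sndCDF ρ) atTop (𝓝 1) := aux_tendsto_atTop
  have hV0 : Tendsto (fstCDF ρ') atBot (𝓝 0) := aux_tendsto_atBot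
  have hV1 : Tendsto (fstCDF ρ') atTop (𝓝 1) := aux_tendsto_atTop
  have hU0 : Tendsto (sndCDF ρ') atBot (𝓝 0) := aux_tendsto_atBot
  have hU1 : Tendsto (sndCDF ρ') atTop (𝓝 1) := aux_tendsto_atTop
  set g : ℝ → ℝ := fun w => quantileFn (fstCDF ρ') (fstCDF ρ w) with hgdef
  set h : ℝ → ℝ := fun x => quantileFn (sndCDF ρ') (sndCDF ρ x) with hhdef
  have hFVg : ∀ w, fstCDF ρ' (g w) = fstCDF ρ w := fun w =>
    aux_F_quantile hVm hVc hV0 hV1 (aux_mem_Ioo hWm hW0 hW1 w)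
  have hFUh : ∀ x, sndCDF ρ' (h x) = sndCDF ρ x := fun x =>
    aux_F_quantile hUm hUc hU0 hU1 (aux_mem_Ioo hXm hX0 hX1 x)
  have hgm : StrictMono g := fun a b hab =>
    hVm.lt_iff_lt.mp (by rw [hFVg, hFVg]; exact hWm hab)
  have hhm : StrictMono h := fun a b hab =>
    hUm.lt_iff_lt.mp (by rw [hFUh, hFUh]; exact hXm hab)
  have hgsurj : Function.Surjective g := by
    intro z
    obtain ⟨w, hw⟩ := aux_surj hWm hWc hW0 hW1 (aux_mem_Ioo hVm hV0 hV1 z)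
    refine ⟨w, ?_⟩
    show quantileFn (fstCDF ρ') (fstCDF ρ w) = z
    rw [hw, aux_quantile_comp hVm]
  have hhsurj : Function.Surjective h := by
    intro z
    obtain ⟨x, hx⟩ := aux_surj hXm hXc hX0 hX1 (aux_mem_Ioo hUm hU0 hU1 z)
    refine ⟨x, ?_⟩
    show quantileFn (sndCDF ρ') (sndCDF ρ x) = z
    rw [hx, aux_quantile_comp hUm]
  have hgc : Continuous g :=
    (OrderIso.toHomeomorph (StrictMono.orderIsoOfSurjective g hgm hgsurj)).continuous
  have hhc : Continuous h :=
    (OrderIso.toHomeomorph (StrictMono.orderIsoOfSurjective h hhm hhsurj)).continuous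
  have hgemb : MeasurableEmbedding g :=
    (OrderIso.toHomeomorph (StrictMono.orderIsoOfSurjective g hgm hgsurj)).measurableEmbedding
  -- the map `Ψ = (F_V, F_U)` and `G = (g, h)`
  have hΨc : Continuous (fun p : ℝ × ℝ => (fstCDF ρ' p.1, sndCDF ρ' p.2)) :=
    (hVc.comp continuous_fst).prodMk (hUc.comp continuous_snd)
  have hΨinj : Function.Injective (fun p : ℝ × ℝ => (fstCDF ρ' p.1, sndCDF ρ' p.2)) := by
    intro p q hpq
    exact Prod.ext (hVm.injective (congrArg Prod.fst hpq)) (hUm.injective (congrArg Prod.snd hpq))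
  have hΨemb : MeasurableEmbedding (fun p : ℝ × ℝ => (fstCDF ρ' p.1, sndCDF ρ' p.2)) :=
    hΨc.measurableEmbedding hΨinj
  have hGm : Measurable (fun p : ℝ × ℝ => (g p.1, h p.2)) :=
    ((hgc.comp continuous_fst).prodMk (hhc.comp continuous_snd)).measurable
  -- the pushforward identity `map (g × h) ρ = ρ'`
  have hmap : Measure.map (fun p : ℝ × ℝ => (g p.1, h p.2)) ρ = ρ' := by
    have hΨG : ((fun p : ℝ × ℝ => (fstCDF ρ' p.1, sndCDF ρ' p.2)) ∘
        (fun p : ℝ × ℝ => (g p.1, h p.2))) = fun p : ℝ × ℝ => (fstCDF ρ p.1, sndCDF ρ p.2) :=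
      funext fun p => Prod.ext (hFVg p.1) (hFUh p.2)
    have hmm : Measure.map (fun p : ℝ × ℝ => (fstCDF ρ' p.1, sndCDF ρ' p.2))
          (Measure.map (fun p : ℝ × ℝ => (g p.1, h p.2)) ρ)
        = Measure.map (fun p : ℝ × ℝ => (fstCDF ρ' p.1, sndCDF ρ' p.2)) ρ' := by
      rw [Measure.map_map hΨc.measurable hGm, hΨG]
      exact hcop
    ext A hA
    have h1 := hΨemb.map_apply (Measure.map (fun p : ℝ × ℝ => (g p.1, h p.2)) ρ)
      ((fun p : ℝ × ℝ => (fstCDF ρ' p.1, sndCDF ρ' p.2)) '' A)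
    have h2 := hΨemb.map_apply ρ' ((fun p : ℝ × ℝ => (fstCDF ρ' p.1, sndCDF ρ' p.2)) '' A)
    rw [hmm] at h1
    rw [Set.preimage_image_eq A hΨinj] at h1 h2
    rw [← h1, h2]
  -- the first marginals
  have hfst : ρ'.fst = Measure.map g ρ.fst := by
    rw [← hmap]
    show Measure.map Prod.fst _ = Measure.map g (Measure.map Prod.fst ρ)
    rw [Measure.map_map measurable_fst hGm, Measure.map_map hgemb.measurable measurable_fst]
    rfl
  -- the a.e. identity at each rational
  have key : ∀ q : ℚ, ∀ᵐ w ∂ρ.fst, condCDF ρ w q = condCDF ρ' (g w) (h q) := by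
    intro q
    have hae : (fun w => ENNReal.ofReal (condCDF ρ w q))
        =ᵐ[ρ.fst] fun w => ENNReal.ofReal (condCDF ρ' (g w) (h q)) := by
      refine ae_eq_of_forall_setLIntegral_eq_of_sigmaFinite
        ((measurable_condCDF ρ q).ennreal_ofReal)
        (((measurable_condCDF ρ' (h q)).comp hgemb.measurable).ennreal_ofReal) ?_
      intro s hs _
      have hgs : MeasurableSet (g '' s) := hgemb.measurableSet_image.2 hs
      have h2 : ∫⁻ w in s, ENNReal.ofReal (condCDF ρ' (g w) (h q)) ∂ρ.fst
          = ∫⁻ v in g '' s, ENNReal.ofReal (condCDF ρ' v (h q)) ∂ρ'.fst := by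
        rw [hfst, Measure.restrict_map hgemb.measurable hgs,
          lintegral_map ((measurable_condCDF ρ' (h q)).ennreal_ofReal) hgemb.measurable,
          Set.preimage_image_eq s hgm.injective]
      rw [setLIntegral_condCDF ρ q hs, h2, setLIntegral_condCDF ρ' (h q) hgs, ← hmap,
        Measure.map_apply hGm (hgs.prod measurableSet_Iic)]
      congr 1
      ext p
      simp only [Set.mem_preimage, Set.mem_prod, Set.mem_Iic]
      constructor
      · rintro ⟨h1, h2⟩
        exact ⟨Set.mem_image_of_mem g h1, hhm.le_iff_le.2 h2⟩
      · rintro ⟨h1, h2⟩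
        exact ⟨(hgm.injective.mem_set_image).1 h1, hhm.le_iff_le.1 h2⟩
    filter_upwards [hae] with w hw
    exact (ENNReal.ofReal_eq_ofReal_iff (condCDF_nonneg _ _ _) (condCDF_nonneg _ _ _)).mp hw
  have keyall : ∀ᵐ w ∂ρ.fst, ∀ q : ℚ, condCDF ρ w q = condCDF ρ' (g w) (h q) :=
    ae_all_iff.2 key
  filter_upwards [keyall] with w hw
  intro x
  show condCDF ρ w x = condCDF ρ' (g w) (h x)
  -- choose rationals decreasing to `x`
  have hseq : ∀ n : ℕ, ∃ q : ℚ, x < (q : ℝ) ∧ (q : ℝ) < x + ((n : ℝ) + 1)⁻¹ := fun n =>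
    exists_rat_btwn (lt_add_of_pos_right x (by positivity))
  choose qs hq1 hq2 using hseq
  have hqtend : Tendsto (fun n => ((qs n : ℝ))) atTop (𝓝 x) := by
    have hinv : Tendsto (fun n : ℕ => x + ((n : ℝ) + 1)⁻¹) atTop (𝓝 x) := by
      have h1 : Tendsto (fun n : ℕ => ((n : ℝ) + 1)⁻¹) atTop (𝓝 0) := by
        simpa only [one_div] using tendsto_one_div_add_atTop_nhds_zero_nat (𝕜 := ℝ)
      simpa using tendsto_const_nhds.add h1
    exact tendsto_of_tendsto_of_tendsto_of_le_of_le tendsto_const_nhds hinv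
      (fun n => (hq1 n).le) (fun n => (hq2 n).le)
  have hL : Tendsto (fun n => condCDF ρ w (qs n)) atTop (𝓝 (condCDF ρ w x)) := by
    have hrc := (condCDF ρ w).right_continuous x
    exact hrc.tendsto.comp (tendsto_nhdsWithin_of_tendsto_nhds_of_eventually_within _ hqtend
      (Eventually.of_forall fun n => (hq1 n).le))
  have hhx : Tendsto (fun n => h ((qs n : ℝ))) atTop (𝓝 (h x)) :=
    (hhc.tendsto x).comp hqtend
  have hR : Tendsto (fun n => condCDF ρ' (g w) (h (qs n))) atTop
      (𝓝 (condCDF ρ' (g w) (h x))) := by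
    have hrc := (condCDF ρ' (g w)).right_continuous (h x)
    exact hrc.tendsto.comp (tendsto_nhdsWithin_of_tendsto_nhds_of_eventually_within _ hhx
      (Eventually.of_forall fun n => hhm.monotone (hq1 n).le))
  have heq : (fun n => condCDF ρ w (qs n)) = fun n => condCDF ρ' (g w) (h (qs n)) :=
    funext fun n => hw (qs n)
  rw [heq] at hL
  exact tendsto_nhds_unique hL hR
end

section
/- Consider the two-way fixed effects model: on a probability space (Ω, P) let η, V_t, V_{t−1}, V_{t−2} be real-valued random variables, θ_t, θ_{t−1}, θ_{t−2}, α real constants, and define the potential outcomes Y_{0,s} = θ_s + η + V_s and Y_{1,s} = θ_s + η + α + V_s for s ∈ {t−2, t−1, t}. Let G and G' be events of positive probability (the treatment groups D_t = (1,1,1) and D_t = (1,0,1)), and suppose that under the conditional measures P(·|G) and P(·|G') all relevant marginal CDFs are continuous and strictly increasing. If the pair (η + V_t, η + α + V_{t−1}) under P(·|G) has equal copulas with the pair (η + V_{t−1}, η + α + V_{t−2}) under P(·|G'), then the pair (Y_{0,t}, Y_{1,t−1}) under P(·|G) has equal copulas with the pair (Y_{0,t−1}, Y_{1,t−2}) under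 P(·|G'); i.e., the group-wise copula equality Assumption GCE (I) holds. -/
open MeasureTheory ProbabilityTheory

/-- The CDF of a real-valued random variable `X` under a measure `Q`. -/
noncomputable def rvCDF {Ω : Type*} [MeasurableSpace Ω] (Q : Measure Ω) (X : Ω → ℝ) :
    ℝ → ℝ :=
  fun x => (Q {ω | X ω ≤ x}).toReal

/-- Two pairs of real random variables `(X, W)` under `Q` and `(U, V)` under `Q'` have
equal copulas if the random vectors `(F_X(X), F_W(W))` and `(F_U(U), F_V(V))` are identically
distributed, each CDF being computed under its own measure. -/
def HaveEqualCopulas {Ω Ω' : Type*} [MeasurableSpace Ω] [MeasurableSpace Ω']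
    (Q : Measure Ω) (Q' : Measure Ω') (X W : Ω → ℝ) (U V : Ω' → ℝ) : Prop :=
  Measure.map (fun ω => (rvCDF Q X (X ω), rvCDF Q W (W ω))) Q
    = Measure.map (fun ω => (rvCDF Q' U (U ω), rvCDF Q' V (V ω))) Q'

/-- A location shift leaves the rank (CDF evaluated at the variable) unchanged. -/
lemma rvCDF_shift {Ω : Type*} [MeasurableSpace Ω] (Q : Measure Ω) (X : Ω → ℝ)
    (c : ℝ) (ω : Ω) :
    rvCDF Q (fun ω' => c + X ω') (c + X ω) = rvCDF Q X (X ω) := by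
  have h : {ω' | c + X ω' ≤ c + X ω} = {ω' | X ω' ≤ X ω} := by
    ext ω'; simp
  simp only [rvCDF, h]

/-- **Proposition 1 of the paper**: a sufficient condition for the group-wise copula equality
Assumption GCE (I) in the two-way fixed effects model
`Y_{0,s} = θ_s + η + V_s`, `Y_{1,s} = θ_s + η + α + V_s`.
If, conditional on the groups `G = {D_t = (1,1,1)}` and `G' = {D_t = (1,0,1)}`, the pair
`(η + V_t, η + α + V_{t−1})` under `P[|G]` has equal copulas with
`(η + V_{t−1}, η + α + V_{t−2})` under `P[|G']`, then the pair `(Y_{0,t}, Y_{1,t−1})` under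
`P[|G]` has equal copulas with `(Y_{0,t−1}, Y_{1,t−2})` under `P[|G']`. -/
theorem twfe_sufficient_condition_for_GCE
    {Ω : Type*} [MeasurableSpace Ω] (P : Measure Ω) [IsProbabilityMeasure P]
    (η Vt Vtm1 Vtm2 : Ω → ℝ)
    (hη : Measurable η) (hVt : Measurable Vt) (hVtm1 : Measurable Vtm1)
    (hVtm2 : Measurable Vtm2)
    (θt θtm1 θtm2 α : ℝ)
    (G G' : Set Ω) (hG : MeasurableSet G) (hG' : MeasurableSet G')
    (hGpos : 0 < P G) (hG'pos : 0 < P G')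
    (hc1 : Continuous (rvCDF (P[|G]) (fun ω => η ω + Vt ω)))
    (hm1 : StrictMono (rvCDF (P[|G]) (fun ω => η ω + Vt ω)))
    (hc2 : Continuous (rvCDF (P[|G]) (fun ω => η ω + α + Vtm1 ω)))
    (hm2 : StrictMono (rvCDF (P[|G]) (fun ω => η ω + α + Vtm1 ω)))
    (hc3 : Continuous (rvCDF (P[|G']) (fun ω => η ω + Vtm1 ω)))
    (hm3 : StrictMono (rvCDF (P[|G']) (fun ω => η ω + Vtm1 ω)))
    (hc4 : Continuous (rvCDF (P[|G']) (fun ω => η ω + α + Vtm2 ω)))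
    (hm4 : StrictMono (rvCDF (P[|G']) (fun ω => η ω + α + Vtm2 ω)))
    (hcop : HaveEqualCopulas (P[|G]) (P[|G'])
        (fun ω => η ω + Vt ω) (fun ω => η ω + α + Vtm1 ω)
        (fun ω => η ω + Vtm1 ω) (fun ω => η ω + α + Vtm2 ω)) :
    HaveEqualCopulas (P[|G]) (P[|G'])
        (fun ω => θt + η ω + Vt ω) (fun ω => θtm1 + η ω + α + Vtm1 ω)
        (fun ω => θtm1 + η ω + Vtm1 ω) (fun ω => θtm2 + η ω + α + Vtm2 ω) := by
  unfold HaveEqualCopulas at hcop ⊢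
  have e1 : (fun ω => θt + η ω + Vt ω) = (fun ω => θt + (η ω + Vt ω)) := by
    funext ω; ring
  have e2 : (fun ω => θtm1 + η ω + α + Vtm1 ω)
      = (fun ω => θtm1 + (η ω + α + Vtm1 ω)) := by funext ω; ring
  have e3 : (fun ω => θtm1 + η ω + Vtm1 ω) = (fun ω => θtm1 + (η ω + Vtm1 ω)) := by
    funext ω; ring
  have e4 : (fun ω => θtm2 + η ω + α + Vtm2 ω)
      = (fun ω => θtm2 + (η ω + α + Vtm2 ω)) := by funext ω; ring
  rw [e1, e2, e3, e4]
  have h1 : (fun ω => (rvCDF (P[|G]) (fun ω' => θt + (η ω' + Vt ω'))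
        (θt + (η ω + Vt ω)),
      rvCDF (P[|G]) (fun ω' => θtm1 + (η ω' + α + Vtm1 ω'))
        (θtm1 + (η ω + α + Vtm1 ω))))
      = (fun ω => (rvCDF (P[|G]) (fun ω' => η ω' + Vt ω') (η ω + Vt ω),
          rvCDF (P[|G]) (fun ω' => η ω' + α + Vtm1 ω') (η ω + α + Vtm1 ω))) := by
    funext ω
    rw [rvCDF_shift (P[|G]) (fun ω' => η ω' + Vt ω') θt ω,
      rvCDF_shift (P[|G]) (fun ω' => η ω' + α + Vtm1 ω') θtm1 ω]
  have h2 : (fun ω => (rvCDF (P[|G']) (fun ω' => θtm1 + (η ω' + Vtm1 ω'))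
        (θtm1 + (η ω + Vtm1 ω)),
      rvCDF (P[|G']) (fun ω' => θtm2 + (η ω' + α + Vtm2 ω'))
        (θtm2 + (η ω + α + Vtm2 ω))))
      = (fun ω => (rvCDF (P[|G']) (fun ω' => η ω' + Vtm1 ω') (η ω + Vtm1 ω),
          rvCDF (P[|G']) (fun ω' => η ω' + α + Vtm2 ω') (η ω + α + Vtm2 ω))) := by
    funext ω
    rw [rvCDF_shift (P[|G']) (fun ω' => η ω' + Vtm1 ω') θtm1 ω,
      rvCDF_shift (P[|G']) (fun ω' => η ω' + α + Vtm2 ω') θtm2 ω]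
  rw [h1, h2]
  exact hcop
end

section
/- Let ρ be a probability measure on ℝ × (ℝ × ℝ) with first marginal ρ.fst and disintegration kernel K = ρ.condKernel, and let F̄1(y) = ∫ F1(y | y') dρ.fst(y') and F̄0(y) = ∫ F0(y | y') dρ.fst(y') be the unconditional marginal CDFs. Then for every δ ∈ ℝ the bounds obtained by integrating the conditional Williamson–Downs bounds are at least as tight as the unconditional Williamson–Downs bounds: sup_{y ∈ ℝ} max(F̄1(y) − F̄0(y − δ), 0) ≤ ∫ sup_{y ∈ ℝ} max(F1(y | y') − F0(y − δ | y'), 0) dρ.fst(y'), and ∫ (1 + inf_{y ∈ ℝ} min(F1(y | y') − F0(y − δ | y'), 0)) dρ.fst(y') ≤ 1 + inf_{y ∈ ℝ} min(F̄1(y) − F̄0(y − δ), 0). -/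
open MeasureTheory ProbabilityTheory

open Set Filter Topology


private lemma real_ciSup_rat_ge (f : ℝ → ℝ) (hrc : ∀ x, ContinuousWithinAt f (Ici x) x)
    (hub : ∀ x, f x ≤ 1) : (⨆ y : ℝ, f y) ≤ ⨆ q : ℚ, f q := by
  have hbddq : BddAbove (range fun q : ℚ => f (q : ℝ)) := ⟨1, by rintro _ ⟨q, rfl⟩; exact hub _⟩
  refine ciSup_le fun y => le_of_forall_lt fun c hc => ?_
  have hmem : f ⁻¹' Ioi c ∈ 𝓝[Ici y] y := hrc y (Ioi_mem_nhds hc)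
  rw [Metric.mem_nhdsWithin_iff] at hmem
  obtain ⟨ε, hε, hsub⟩ := hmem
  obtain ⟨q, hq1, hq2⟩ := exists_rat_btwn (lt_add_of_pos_right y hε)
  have hq : (q : ℝ) ∈ Metric.ball y ε ∩ Ici y := by
    refine ⟨?_, le_of_lt hq1⟩
    rw [Metric.mem_ball, Real.dist_eq, abs_of_nonneg (by linarith)]
    linarith
  exact lt_of_lt_of_le (hsub hq) (le_ciSup hbddq q)

private lemma real_ciInf_rat_le (f : ℝ → ℝ) (hrc : ∀ x, ContinuousWithinAt f (Ici x) x)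
    (hlb : ∀ x, -1 ≤ f x) : (⨅ q : ℚ, f q) ≤ ⨅ y : ℝ, f y := by
  have hbddq : BddBelow (range fun q : ℚ => f (q : ℝ)) := ⟨-1, by rintro _ ⟨q, rfl⟩; exact hlb _⟩
  refine le_ciInf fun y => ?_
  by_contra hlt
  push_neg at hlt
  have hmem : f ⁻¹' Iio (⨅ q : ℚ, f (q : ℝ)) ∈ 𝓝[Ici y] y := hrc y (Iio_mem_nhds hlt)
  rw [Metric.mem_nhdsWithin_iff] at hmem
  obtain ⟨ε, hε, hsub⟩ := hmem
  obtain ⟨q, hq1, hq2⟩ := exists_rat_btwn (lt_add_of_pos_right y hε)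
  have hq : (q : ℝ) ∈ Metric.ball y ε ∩ Ici y := by
    refine ⟨?_, le_of_lt hq1⟩
    rw [Metric.mem_ball, Real.dist_eq, abs_of_nonneg (by linarith)]
    linarith
  exact absurd (hsub hq) (not_lt.2 (ciInf_le hbddq q))

private lemma integrable_of_bdd {ν : Measure ℝ} [IsProbabilityMeasure ν] {f : ℝ → ℝ}
    (hm : Measurable f) (hb : ∀ x, |f x| ≤ 1) : Integrable f ν :=
  (integrable_const 1).mono' hm.aestronglyMeasurable (ae_of_all _ (by simpa using hb))

private theorem iwd_aux (ν : Measure ℝ) [IsProbabilityMeasure ν]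
    (K : Kernel ℝ (ℝ × ℝ)) [IsMarkovKernel K] (δ : ℝ) :
    (⨆ y : ℝ, max ((∫ y', (K y' {p : ℝ × ℝ | p.1 ≤ y}).toReal ∂ν)
          - (∫ y', (K y' {p : ℝ × ℝ | p.2 ≤ y - δ}).toReal ∂ν)) 0)
        ≤ (∫ y', ⨆ y : ℝ, max ((K y' {p : ℝ × ℝ | p.1 ≤ y}).toReal
              - (K y' {p : ℝ × ℝ | p.2 ≤ y - δ}).toReal) 0 ∂ν)
    ∧ (∫ y', (1 + ⨅ y : ℝ, min ((K y' {p : ℝ × ℝ | p.1 ≤ y}).toReal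
              - (K y' {p : ℝ × ℝ | p.2 ≤ y - δ}).toReal) 0) ∂ν)
        ≤ 1 + ⨅ y : ℝ, min ((∫ y', (K y' {p : ℝ × ℝ | p.1 ≤ y}).toReal ∂ν)
              - (∫ y', (K y' {p : ℝ × ℝ | p.2 ≤ y - δ}).toReal ∂ν)) 0 := by
  classical
  -- basic measurability of the sets
  have hs1 : ∀ y : ℝ, MeasurableSet {p : ℝ × ℝ | p.1 ≤ y} := fun y =>
    measurableSet_le measurable_fst measurable_const
  have hs0 : ∀ y : ℝ, MeasurableSet {p : ℝ × ℝ | p.2 ≤ y} := fun y =>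
    measurableSet_le measurable_snd measurable_const
  -- pointwise bounds
  have htb : ∀ (y' : ℝ) (s : Set (ℝ × ℝ)), (K y' s).toReal ≤ 1 := fun y' s => by
    have h := ENNReal.toReal_mono ENNReal.one_ne_top (prob_le_one (μ := K y') (s := s))
    simpa using h
  have habs : ∀ y' y : ℝ,
      |(K y' {p : ℝ × ℝ | p.1 ≤ y}).toReal - (K y' {p : ℝ × ℝ | p.2 ≤ y - δ}).toReal| ≤ 1 := by
    intro y' y
    have h1 := htb y' {p : ℝ × ℝ | p.1 ≤ y}
    have h0 := htb y' {p : ℝ × ℝ | p.2 ≤ y - δ}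
    have h1' : (0:ℝ) ≤ (K y' {p : ℝ × ℝ | p.1 ≤ y}).toReal := ENNReal.toReal_nonneg
    have h0' : (0:ℝ) ≤ (K y' {p : ℝ × ℝ | p.2 ≤ y - δ}).toReal := ENNReal.toReal_nonneg
    rw [abs_le]; constructor <;> linarith
  -- cdf representation
  have hcdf1 : ∀ y' y : ℝ,
      (K y' {p : ℝ × ℝ | p.1 ≤ y}).toReal = cdf ((K y').map Prod.fst) y := by
    intro y' y
    haveI : IsProbabilityMeasure ((K y').map Prod.fst) :=
      Measure.isProbabilityMeasure_map measurable_fst.aemeasurable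
    rw [cdf_eq_real, Measure.real, Measure.map_apply measurable_fst measurableSet_Iic]; rfl
  have hcdf0 : ∀ y' y : ℝ,
      (K y' {p : ℝ × ℝ | p.2 ≤ y}).toReal = cdf ((K y').map Prod.snd) y := by
    intro y' y
    haveI : IsProbabilityMeasure ((K y').map Prod.snd) :=
      Measure.isProbabilityMeasure_map measurable_snd.aemeasurable
    rw [cdf_eq_real, Measure.real, Measure.map_apply measurable_snd measurableSet_Iic]; rfl
  -- right continuity in y
  have hrc : ∀ y' x : ℝ, ContinuousWithinAt
      (fun y => (K y' {p : ℝ × ℝ | p.1 ≤ y}).toReal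
        - (K y' {p : ℝ × ℝ | p.2 ≤ y - δ}).toReal) (Ici x) x := by
    intro y' x
    have h1 := (cdf ((K y').map Prod.fst)).right_continuous x
    have h0 := (cdf ((K y').map Prod.snd)).right_continuous (x - δ)
    have h0' : ContinuousWithinAt (fun y => cdf ((K y').map Prod.snd) (y - δ)) (Ici x) x :=
      ContinuousWithinAt.comp (f := fun y : ℝ => y - δ) (s := Ici x) (t := Ici (x - δ))
        h0 (continuous_sub_right δ).continuousWithinAt
        (fun z (hz : x ≤ z) => sub_le_sub_right hz δ)
    refine (h1.sub h0').congr (fun z _ => ?_) ?_ <;>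
      simp [hcdf1, hcdf0]
  -- measurability in y'
  have hm1 : ∀ y : ℝ, Measurable fun y' => (K y' {p : ℝ × ℝ | p.1 ≤ y}).toReal := fun y =>
    (K.measurable_coe (hs1 y)).ennreal_toReal
  have hm0 : ∀ y : ℝ, Measurable fun y' => (K y' {p : ℝ × ℝ | p.2 ≤ y}).toReal := fun y =>
    (K.measurable_coe (hs0 y)).ennreal_toReal
  have hmh : ∀ y : ℝ, Measurable fun y' =>
      (K y' {p : ℝ × ℝ | p.1 ≤ y}).toReal - (K y' {p : ℝ × ℝ | p.2 ≤ y - δ}).toReal :=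
    fun y => (hm1 y).sub (hm0 (y - δ))
  have hinth : ∀ y : ℝ, Integrable (fun y' =>
      (K y' {p : ℝ × ℝ | p.1 ≤ y}).toReal - (K y' {p : ℝ × ℝ | p.2 ≤ y - δ}).toReal) ν :=
    fun y => integrable_of_bdd (hmh y) (fun y' => habs y' y)
  have hint1 : ∀ y : ℝ, Integrable (fun y' => (K y' {p : ℝ × ℝ | p.1 ≤ y}).toReal) ν :=
    fun y => integrable_of_bdd (hm1 y)
      (fun y' => by rw [abs_of_nonneg ENNReal.toReal_nonneg]; exact htb _ _)
  have hint0 : ∀ y : ℝ, Integrable (fun y' => (K y' {p : ℝ × ℝ | p.2 ≤ y}).toReal) ν :=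
    fun y => integrable_of_bdd (hm0 y)
      (fun y' => by rw [abs_of_nonneg ENNReal.toReal_nonneg]; exact htb _ _)
  -- the sup and inf integrands
  set g : ℝ → ℝ := fun y' => ⨆ y : ℝ, max ((K y' {p : ℝ × ℝ | p.1 ≤ y}).toReal
      - (K y' {p : ℝ × ℝ | p.2 ≤ y - δ}).toReal) 0 with hg
  set w : ℝ → ℝ := fun y' => ⨅ y : ℝ, min ((K y' {p : ℝ × ℝ | p.1 ≤ y}).toReal
      - (K y' {p : ℝ × ℝ | p.2 ≤ y - δ}).toReal) 0 with hw
  have hbddA : ∀ y' : ℝ, BddAbove (range fun y : ℝ => max ((K y' {p : ℝ × ℝ | p.1 ≤ y}).toReal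
      - (K y' {p : ℝ × ℝ | p.2 ≤ y - δ}).toReal) 0) := by
    intro y'
    refine ⟨1, ?_⟩
    rintro _ ⟨y, rfl⟩
    exact max_le ((abs_le.1 (habs y' y)).2) zero_le_one
  have hbddB : ∀ y' : ℝ, BddBelow (range fun y : ℝ => min ((K y' {p : ℝ × ℝ | p.1 ≤ y}).toReal
      - (K y' {p : ℝ × ℝ | p.2 ≤ y - δ}).toReal) 0) := by
    intro y'
    refine ⟨-1, ?_⟩
    rintro _ ⟨y, rfl⟩
    exact le_min ((abs_le.1 (habs y' y)).1) (by norm_num)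
  have hg0 : ∀ y', 0 ≤ g y' := fun y' =>
    (le_max_right _ 0).trans (le_ciSup (hbddA y') (0 : ℝ))
  have hg1 : ∀ y', g y' ≤ 1 := fun y' =>
    ciSup_le fun y => max_le ((abs_le.1 (habs y' y)).2) zero_le_one
  have hw0 : ∀ y', w y' ≤ 0 := fun y' =>
    (ciInf_le (hbddB y') (0 : ℝ)).trans (min_le_right _ 0)
  have hw1 : ∀ y', -1 ≤ w y' := fun y' =>
    le_ciInf fun y => le_min ((abs_le.1 (habs y' y)).1) (by norm_num)
  -- measurability of g and w via rationals
  have hgq : g = fun y' => ⨆ q : ℚ, max ((K y' {p : ℝ × ℝ | p.1 ≤ (q:ℝ)}).toReal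
      - (K y' {p : ℝ × ℝ | p.2 ≤ (q:ℝ) - δ}).toReal) 0 := by
    funext y'
    refine le_antisymm ?_ (ciSup_le fun q => le_ciSup (hbddA y') (q : ℝ))
    exact real_ciSup_rat_ge _ (fun x => (hrc y' x).max continuousWithinAt_const)
      (fun x => max_le ((abs_le.1 (habs y' x)).2) zero_le_one)
  have hwq : w = fun y' => ⨅ q : ℚ, min ((K y' {p : ℝ × ℝ | p.1 ≤ (q:ℝ)}).toReal
      - (K y' {p : ℝ × ℝ | p.2 ≤ (q:ℝ) - δ}).toReal) 0 := by
    funext y'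
    refine le_antisymm (le_ciInf fun q => ciInf_le (hbddB y') (q : ℝ)) ?_
    exact real_ciInf_rat_le _ (fun x => (hrc y' x).min continuousWithinAt_const)
      (fun x => le_min ((abs_le.1 (habs y' x)).1) (by norm_num))
  have hgm : Measurable g := by
    rw [hgq]
    exact Measurable.iSup fun q : ℚ => (hmh (q : ℝ)).max measurable_const
  have hwm : Measurable w := by
    rw [hwq]
    exact Measurable.iInf fun q : ℚ => (hmh (q : ℝ)).min measurable_const
  have hgint : Integrable g ν := integrable_of_bdd hgm
    (fun y' => by rw [abs_of_nonneg (hg0 y')]; exact hg1 y')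
  have hwint : Integrable w ν := integrable_of_bdd hwm
    (fun y' => by rw [abs_of_nonpos (hw0 y')]; linarith [hw1 y'])
  have hintmax : ∀ y : ℝ, Integrable (fun y' => max ((K y' {p : ℝ × ℝ | p.1 ≤ y}).toReal
      - (K y' {p : ℝ × ℝ | p.2 ≤ y - δ}).toReal) 0) ν := fun y =>
    integrable_of_bdd ((hmh y).max measurable_const) (fun y' => by
      rw [abs_of_nonneg (le_max_right _ _)]
      exact max_le ((abs_le.1 (habs y' y)).2) zero_le_one)
  constructor
  · refine ciSup_le fun y => ?_
    rw [← integral_sub (hint1 y) (hint0 (y - δ))]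
    refine max_le ?_ (integral_nonneg hg0)
    calc (∫ y', (K y' {p : ℝ × ℝ | p.1 ≤ y}).toReal
          - (K y' {p : ℝ × ℝ | p.2 ≤ y - δ}).toReal ∂ν)
        ≤ ∫ y', max ((K y' {p : ℝ × ℝ | p.1 ≤ y}).toReal
          - (K y' {p : ℝ × ℝ | p.2 ≤ y - δ}).toReal) 0 ∂ν :=
          integral_mono (hinth y) (hintmax y) (fun y' => le_max_left _ _)
      _ ≤ ∫ y', g y' ∂ν :=
          integral_mono (hintmax y) hgint (fun y' => le_ciSup (hbddA y') y)
  · rw [integral_add (integrable_const 1) hwint, integral_const, probReal_univ,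
      smul_eq_mul, mul_one]
    refine add_le_add (le_refl 1) (le_ciInf fun y => ?_)
    refine le_min ?_ (integral_nonpos hw0)
    rw [← integral_sub (hint1 y) (hint0 (y - δ))]
    exact integral_mono hwint (hinth y)
      (fun y' => (ciInf_le (hbddB y') y).trans (min_le_left _ _))

/-- **The integrated Williamson–Downs bounds are at least as tight as the unconditional ones**
(Section 5.1 of the paper).  Let `ρ` be a probability measure on `ℝ × (ℝ × ℝ)` with first
marginal `ρ.fst` and disintegration kernel `K = ρ.condKernel`, and let
`F̄1(y) = ∫ F1(y | y') dρ.fst(y')` and `F̄0(y) = ∫ F0(y | y') dρ.fst(y')` be the unconditional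
marginal CDFs.  Then the bounds obtained by integrating the conditional Williamson–Downs bounds
lie inside the Williamson–Downs bounds computed from the marginals alone. -/
theorem integrated_williamson_downs_tighter
    (ρ : Measure (ℝ × ℝ × ℝ)) [IsProbabilityMeasure ρ] (δ : ℝ) :
    (⨆ y : ℝ, max ((∫ y', (ρ.condKernel y' {p : ℝ × ℝ | p.1 ≤ y}).toReal ∂ρ.fst)
          - (∫ y', (ρ.condKernel y' {p : ℝ × ℝ | p.2 ≤ y - δ}).toReal ∂ρ.fst)) 0)
        ≤ (∫ y', ⨆ y : ℝ, max ((ρ.condKernel y' {p : ℝ × ℝ | p.1 ≤ y}).toReal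
              - (ρ.condKernel y' {p : ℝ × ℝ | p.2 ≤ y - δ}).toReal) 0 ∂ρ.fst)
    ∧ (∫ y', (1 + ⨅ y : ℝ, min ((ρ.condKernel y' {p : ℝ × ℝ | p.1 ≤ y}).toReal
              - (ρ.condKernel y' {p : ℝ × ℝ | p.2 ≤ y - δ}).toReal) 0) ∂ρ.fst)
        ≤ 1 + ⨅ y : ℝ, min ((∫ y', (ρ.condKernel y' {p : ℝ × ℝ | p.1 ≤ y}).toReal ∂ρ.fst)
              - (∫ y', (ρ.condKernel y' {p : ℝ × ℝ | p.2 ≤ y - δ}).toReal ∂ρ.fst)) 0 :=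
  iwd_aux ρ.fst ρ.condKernel δ
end

section
/- Let ρ be a probability measure on ℝ × (ℝ × ℝ) with first marginal ρ.fst and disintegration kernel K = ρ.condKernel, and let F̄1(y1) = ∫ F1(y1 | y') dρ.fst(y') and F̄0(y0) = ∫ F0(y0 | y') dρ.fst(y') be the unconditional marginal CDFs. Then for all y1, y0 ∈ ℝ the bounds obtained by integrating the conditional Fréchet–Hoeffding bounds are at least as tight as the unconditional Fréchet–Hoeffding bounds: max(F̄1(y1) + F̄0(y0) − 1, 0) ≤ ∫ max(F1(y1 | y') + F0(y0 | y') − 1, 0) dρ.fst(y'), and ∫ min(F1(y1 | y'), F0(y0 | y')) dρ.fst(y') ≤ min(F̄1(y1), F̄0(y0)). -/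
open MeasureTheory ProbabilityTheory

lemma kernel_toReal_int {α β : Type*} [MeasurableSpace α] [MeasurableSpace β]
    (κ : ProbabilityTheory.Kernel α β) [ProbabilityTheory.IsMarkovKernel κ]
    (μ : Measure α) [IsProbabilityMeasure μ] {S : Set β} (hS : MeasurableSet S) :
    Integrable (fun a => (κ a S).toReal) μ := by
  have hmeas : Measurable fun a => (κ a S).toReal :=
    (κ.measurable_coe hS).ennreal_toReal
  refine ⟨hmeas.aestronglyMeasurable, ?_⟩
  apply HasFiniteIntegral.of_bounded (C := 1)
  filter_upwards with a
  simp only [Real.norm_eq_abs, abs_of_nonneg ENNReal.toReal_nonneg]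
  refine ENNReal.toReal_le_of_le_ofReal one_pos.le ?_
  simp only [ENNReal.ofReal_one]
  exact (measure_mono (Set.subset_univ S)).trans_eq measure_univ

/-- **The integrated Fréchet–Hoeffding bounds are at least as tight as the unconditional ones**.
Let `ρ` be a probability measure on `ℝ × (ℝ × ℝ)` with first marginal `ρ.fst` and disintegration
kernel `K = ρ.condKernel`, and let `F̄1(y1) = ∫ F1(y1 | y') dρ.fst(y')` and
`F̄0(y0) = ∫ F0(y0 | y') dρ.fst(y')` be the unconditional marginal CDFs.  Then the bounds
obtained by integrating the conditional Fréchet–Hoeffding bounds lie inside the classical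
Fréchet–Hoeffding bounds computed from the marginals alone. -/
theorem integrated_frechet_hoeffding_tighter
    (ρ : Measure (ℝ × ℝ × ℝ)) [IsProbabilityMeasure ρ] (y1 y0 : ℝ) :
    max ((∫ y', (ρ.condKernel y' {p : ℝ × ℝ | p.1 ≤ y1}).toReal ∂ρ.fst)
          + (∫ y', (ρ.condKernel y' {p : ℝ × ℝ | p.2 ≤ y0}).toReal ∂ρ.fst) - 1) 0
        ≤ (∫ y', max ((ρ.condKernel y' {p : ℝ × ℝ | p.1 ≤ y1}).toReal
              + (ρ.condKernel y' {p : ℝ × ℝ | p.2 ≤ y0}).toReal - 1) 0 ∂ρ.fst)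
    ∧ (∫ y', min ((ρ.condKernel y' {p : ℝ × ℝ | p.1 ≤ y1}).toReal)
              ((ρ.condKernel y' {p : ℝ × ℝ | p.2 ≤ y0}).toReal) ∂ρ.fst)
        ≤ min (∫ y', (ρ.condKernel y' {p : ℝ × ℝ | p.1 ≤ y1}).toReal ∂ρ.fst)
              (∫ y', (ρ.condKernel y' {p : ℝ × ℝ | p.2 ≤ y0}).toReal ∂ρ.fst) := by
  set S1 : Set (ℝ × ℝ) := {p : ℝ × ℝ | p.1 ≤ y1} with hS1def
  set S0 : Set (ℝ × ℝ) := {p : ℝ × ℝ | p.2 ≤ y0} with hS0def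
  have hS1 : MeasurableSet S1 := measurableSet_le measurable_fst measurable_const
  have hS0 : MeasurableSet S0 := measurableSet_le measurable_snd measurable_const
  have hf : Integrable (fun y' => (ρ.condKernel y' S1).toReal) ρ.fst :=
    kernel_toReal_int _ _ hS1
  have hg : Integrable (fun y' => (ρ.condKernel y' S0).toReal) ρ.fst :=
    kernel_toReal_int _ _ hS0
  have hfg : Integrable (fun y' => (ρ.condKernel y' S1).toReal
      + (ρ.condKernel y' S0).toReal) ρ.fst := hf.add hg
  have hmax : Integrable (fun y' => max ((ρ.condKernel y' S1).toReal
      + (ρ.condKernel y' S0).toReal - 1) 0) ρ.fst := (hfg.sub (integrable_const 1)).pos_part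
  have hmin : Integrable (fun y' => min ((ρ.condKernel y' S1).toReal)
      ((ρ.condKernel y' S0).toReal)) ρ.fst := by
    exact hf.inf hg
  constructor
  · rw [max_le_iff]
    refine ⟨?_, integral_nonneg fun y' => le_max_right _ _⟩
    have h1 : (∫ y', (ρ.condKernel y' S1).toReal ∂ρ.fst)
        + (∫ y', (ρ.condKernel y' S0).toReal ∂ρ.fst) - 1
        = ∫ y', ((ρ.condKernel y' S1).toReal + (ρ.condKernel y' S0).toReal - 1) ∂ρ.fst := by
      rw [integral_sub hfg (integrable_const 1), integral_add hf hg]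
      simp
    rw [h1]
    exact integral_mono (hfg.sub (integrable_const 1)) hmax fun y' => le_max_left _ _
  · rw [le_min_iff]
    exact ⟨integral_mono hmin hf fun y' => min_le_left _ _,
      integral_mono hmin hg fun y' => min_le_right _ _⟩
end
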